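/- arXiv:1812.00146 — 8 statements merged into one kernel-verified Lean document; each statement's English description precedes it below -/
import Mathlib

section
/- Let H be a real Hilbert space, μ ∈ (0,∞), I an arbitrary index set, and (x_i, q_i) ∈ H × H for i ∈ I. Then there exists a maximal monotone relation A on H that is μ-strongly monotone and satisfies (x_i, q_i) ∈ A for all i ∈ I if and only if ⟨x_i − x_j, q_i − q_j⟩ ≥ μ‖x_i − x_j‖² for all i, j ∈ I. -/
open RealInnerProductSpace

/-- A relation `A ⊆ H × H` is monotone. -/
def MonotoneRel {H : Type*} [NormedAddCommGroup H] [InnerProductSpace ℝ H]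
    (A : Set (H × H)) : Prop :=
  ∀ p ∈ A, ∀ p' ∈ A, ⟪p.2 - p'.2, p.1 - p'.1⟫ ≥ 0

/-- A relation `A ⊆ H × H` is maximal monotone: monotone and not properly contained in
any monotone relation. -/
def MaximalMonotoneRel {H : Type*} [NormedAddCommGroup H] [InnerProductSpace ℝ H]
    (A : Set (H × H)) : Prop :=
  MonotoneRel A ∧ ∀ B : Set (H × H), MonotoneRel B → A ⊆ B → B = A

/-- A relation `A ⊆ H × H` is `μ`-strongly monotone. -/
def StronglyMonotoneRel {H : Type*} [NormedAddCommGroup H] [InnerProductSpace ℝ H]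
    (μ : ℝ) (A : Set (H × H)) : Prop :=
  ∀ p ∈ A, ∀ p' ∈ A, ⟪p.2 - p'.2, p.1 - p'.1⟫ ≥ μ * ‖p.1 - p'.1‖ ^ 2

/-!
The map `(x, q) ↦ (x + q, (1 + 2μ) x - q)` turns `μ`-strongly monotone relations into
nonexpansive ones, since for differences `d = x - x'`, `e = q - q'` one has
`‖d + e‖² - ‖(1 + 2μ) d - e‖² = 4 (1 + μ) (⟪e, d⟫ - μ ‖d‖²)`.
By Zorn the data extend to a relation `A` that is maximal among `μ`-strongly monotone relations.
The one-point Kirszbraun–Valentine theorem in this transformed picture adds to `A` a point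
`(x, q)` with any prescribed `x + q`, so `I + A` is onto by maximality; a monotone relation
with `I + A` onto is maximal monotone (the easy half of Minty's theorem).

The one-point Kirszbraun theorem is first proved for finitely many constraints, by minimising
`maxᵢ (‖w - yᵢ‖² - ‖ζ - aᵢ‖²)`: a minimiser with positive value would be a barycentre of the
active `yᵢ`, which the variance identity rules out. It extends to arbitrary families because
bounded closed convex subsets of a Hilbert space are weakly compact.
-/

open Set Filter Topology

section WeakCompactness

variable {E : Type*} [NormedAddCommGroup E] [NormedSpace ℝ E]
  {H : Type*} [NormedAddCommGroup H] [InnerProductSpace ℝ H] [CompleteSpace H]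

theorem Convex.isClosed_toWeakSpace_symm_preimage {s : Set E} (hconv : Convex ℝ s)
    (hc : IsClosed s) : IsClosed ((toWeakSpace ℝ E).symm ⁻¹' s) := by
  rw [← LinearEquiv.image_eq_preimage_symm, ← closure_eq_iff_isClosed,
    ← hconv.toWeakSpace_closure ℝ, hc.closure_eq]

theorem inclusionInDoubleDualWeak_surjective :
    Function.Surjective (NormedSpace.inclusionInDoubleDualWeak ℝ H) := by
  intro φ
  let f : StrongDual ℝ H :=
    { toFun := fun x => φ (innerSL ℝ x)
      map_add' := fun x y => by simp
      map_smul' := fun c x => by simp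
      cont := by fun_prop }
  refine ⟨toWeakSpace ℝ H ((InnerProductSpace.toDual ℝ H).symm f), DFunLike.ext _ _ fun ℓ => ?_⟩
  have hℓ : innerSL ℝ ((InnerProductSpace.toDual ℝ H).symm ℓ) = ℓ := by
    ext y
    simp [InnerProductSpace.toDual_symm_apply]
  change ℓ ((toWeakSpace ℝ H).symm (toWeakSpace ℝ H ((InnerProductSpace.toDual ℝ H).symm f))) = φ ℓ
  rw [LinearEquiv.symm_apply_apply, ← InnerProductSpace.toDual_symm_apply, real_inner_comm,
    InnerProductSpace.toDual_symm_apply]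
  simp [f, hℓ]

theorem Convex.isCompact_toWeakSpace_symm_preimage {s : Set H} (hconv : Convex ℝ s)
    (hc : IsClosed s) (hb : Bornology.IsBounded s) :
    IsCompact ((toWeakSpace ℝ H).symm ⁻¹' s) := by
  have hcl : closure (toWeakSpace ℝ H '' s) = toWeakSpace ℝ H '' s := by
    rw [← hconv.toWeakSpace_closure ℝ, hc.closure_eq]
  rw [← LinearEquiv.image_eq_preimage_symm, ← hcl]
  refine NormedSpace.isCompact_closure_of_isBounded ℝ H _ ?_ ?_
  · rwa [(toWeakSpace ℝ H).injective.preimage_image]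
  · rw [inclusionInDoubleDualWeak_surjective.range_eq]
    exact subset_univ _

theorem nonempty_iInter_of_convex_of_isClosed_of_isBounded {ι : Type*} {t : ι → Set H}
    (hconv : ∀ i, Convex ℝ (t i)) (hc : ∀ i, IsClosed (t i))
    (hb : ∀ i, Bornology.IsBounded (t i)) (hfin : ∀ F : Finset ι, (⋂ i ∈ F, t i).Nonempty) :
    (⋂ i, t i).Nonempty := by
  classical
  cases isEmpty_or_nonempty ι
  · simp
  obtain ⟨i₀⟩ := ‹Nonempty ι›
  obtain ⟨w, -, hw⟩ := ((hconv i₀).isCompact_toWeakSpace_symm_preimage (hc i₀)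
    (hb i₀)).inter_iInter_nonempty (fun i => (toWeakSpace ℝ H).symm ⁻¹' t i)
    (fun i => (hconv i).isClosed_toWeakSpace_symm_preimage (hc i)) fun F => by
      obtain ⟨w, hw⟩ := hfin (insert i₀ F)
      simp only [mem_iInter, Finset.mem_insert, forall_eq_or_imp] at hw
      exact ⟨toWeakSpace ℝ H w, by simpa using hw⟩
  exact ⟨_, by simpa using hw⟩

end WeakCompactness

section Kirszbraun

variable {H : Type*} [NormedAddCommGroup H] [InnerProductSpace ℝ H]

theorem sum_sum_mul_norm_sub_sq {ι : Type*} [Fintype ι] {c : ι → ℝ} (hc1 : ∑ i, c i = 1)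
    (P : ι → H) :
    ∑ i, ∑ j, c i * c j * ‖P i - P j‖ ^ 2
      = 2 * ∑ i, c i * ‖P i‖ ^ 2 - 2 * ‖∑ i, c i • P i‖ ^ 2 := by
  have hcross : ∑ i, ∑ j, c i * c j * ⟪P i, P j⟫ = ‖∑ i, c i • P i‖ ^ 2 := by
    simp only [← real_inner_self_eq_norm_sq, sum_inner, inner_sum, real_inner_smul_left,
      real_inner_smul_right, mul_assoc]
    rw [Finset.sum_comm]
    exact Finset.sum_congr rfl fun i _ => Finset.sum_congr rfl fun j _ => mul_left_comm _ _ _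
  have hdiag : ∀ i, ∑ j, c i * c j * ‖P i‖ ^ 2 = c i * ‖P i‖ ^ 2 := fun i => by
    rw [← Finset.sum_mul, ← Finset.mul_sum, hc1, mul_one]
  have hdiag' : ∑ i, ∑ j, c i * c j * ‖P j‖ ^ 2 = ∑ j, c j * ‖P j‖ ^ 2 := by
    rw [Finset.sum_comm]
    exact Finset.sum_congr rfl fun j _ => by
      rw [← Finset.sum_mul, ← Finset.sum_mul, hc1, one_mul]
  simp only [norm_sub_sq_real, mul_sub, mul_add, Finset.sum_sub_distrib, Finset.sum_add_distrib,
    hdiag, hdiag', ← hcross, mul_left_comm _ (2 : ℝ), ← Finset.mul_sum]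
  ring

theorem sum_mul_norm_sub_sq_le_of_norm_sub_le {ι : Type*} [Fintype ι] {c : ι → ℝ}
    (hc0 : ∀ i, 0 ≤ c i) (hc1 : ∑ i, c i = 1) {a y : ι → H}
    (hk : ∀ i j, ‖y i - y j‖ ≤ ‖a i - a j‖) (ζ : H) :
    ∑ i, c i * ‖∑ j, c j • y j - y i‖ ^ 2 ≤ ∑ i, c i * ‖ζ - a i‖ ^ 2 := by
  have hy := sum_sum_mul_norm_sub_sq hc1 fun i => y i - ∑ j, c j • y j
  have ha := sum_sum_mul_norm_sub_sq hc1 fun i => a i - ζ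
  have hcenter : ∑ i, c i • (y i - ∑ j, c j • y j) = 0 := by
    simp [smul_sub, Finset.sum_sub_distrib, ← Finset.sum_smul, hc1]
  have hle : ∑ i, ∑ j, c i * c j * ‖(y i - ∑ k, c k • y k) - (y j - ∑ k, c k • y k)‖ ^ 2
      ≤ ∑ i, ∑ j, c i * c j * ‖(a i - ζ) - (a j - ζ)‖ ^ 2 := by
    gcongr with i _ j _
    · exact mul_nonneg (hc0 i) (hc0 j)
    · simpa using hk i j
  simp only [hcenter, norm_zero] at hy
  simp only [norm_sub_rev _ (y _), norm_sub_rev ζ]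
  nlinarith [norm_nonneg (∑ i, c i • (a i - ζ))]

theorem exists_forall_norm_sub_lt_of_notMem {C : Set H} (hne : C.Nonempty)
    (hcomplete : IsComplete C) (hconv : Convex ℝ C) {w : H} (hw : w ∉ C) :
    ∃ P ∈ C, ∀ t ∈ Ioc (0 : ℝ) 1, ∀ c ∈ C, ‖w + t • (P - w) - c‖ < ‖w - c‖ := by
  obtain ⟨P, hPC, hPmin⟩ := exists_norm_eq_iInf_of_complete_convex hne hcomplete hconv w
  have hvar := (norm_eq_iInf_iff_real_inner_le_zero hconv hPC).mp hPmin
  have hwP : 0 < ‖w - P‖ := norm_pos_iff.mpr (sub_ne_zero.mpr fun h => hw (h ▸ hPC))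
  refine ⟨P, hPC, fun t ⟨ht0, ht1⟩ c hc => ?_⟩
  have hexpand : ‖w + t • (P - w) - c‖ ^ 2
      = ‖w - c‖ ^ 2 - 2 * t * ⟪w - P, w - c⟫ + t ^ 2 * ‖w - P‖ ^ 2 := by
    rw [show w + t • (P - w) - c = (w - c) - t • (w - P) by module,
      norm_sub_sq_real, real_inner_smul_right, norm_smul, Real.norm_of_nonneg ht0.le,
      real_inner_comm]
    ring
  have hinner : ‖w - P‖ ^ 2 ≤ ⟪w - P, w - c⟫ := by
    have := hvar c hc
    rw [show w - c = (w - P) - (c - P) by abel, inner_sub_right, real_inner_self_eq_norm_sq]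
    linarith
  refine lt_of_pow_lt_pow_left₀ 2 (norm_nonneg _) ?_
  rw [hexpand]
  nlinarith [mul_pos ht0 (pow_pos hwP 2),
    mul_nonneg (mul_nonneg ht0.le (sub_nonneg.2 ht1)) (pow_pos hwP 2).le]

theorem mem_convexHull_active_of_minimax {κ : Type*} [Finite κ] {y : κ → H} {r : κ → ℝ}
    {K : Set H} (hK : Convex ℝ K) (hyK : ∀ i, y i ∈ K) {w₀ : H} (hw₀ : w₀ ∈ K) {M : ℝ}
    (hle : ∀ i, ‖w₀ - y i‖ ^ 2 - r i ≤ M) (hmin : ∀ w ∈ K, ∃ i, M ≤ ‖w - y i‖ ^ 2 - r i) :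
    w₀ ∈ convexHull ℝ (y '' {i | ‖w₀ - y i‖ ^ 2 - r i = M}) := by
  set T := {i | ‖w₀ - y i‖ ^ 2 - r i = M}
  have hT : (y '' T).Nonempty := by
    obtain ⟨i, hi⟩ := hmin w₀ hw₀
    exact ⟨y i, i, (hle i).antisymm hi, rfl⟩
  by_contra hw
  obtain ⟨P, hPC, hP⟩ := exists_forall_norm_sub_lt_of_notMem (hT.mono (subset_convexHull ℝ _))
    ((toFinite _).isCompact_convexHull (𝕜 := ℝ)).isComplete (convex_convexHull ℝ _) hw
  have hnear : ∀ᶠ t in 𝓝[>] (0 : ℝ),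
      t ∈ Ioc 0 1 ∧ ∀ i, ‖w₀ + t • (P - w₀) - y i‖ ^ 2 - r i < M := by
    refine Filter.Eventually.and (Ioc_mem_nhdsGT one_pos) (eventually_all.2 fun i => ?_)
    by_cases hi : i ∈ T
    · filter_upwards [Ioc_mem_nhdsGT one_pos] with t ht
      have := hP t ht (y i) (subset_convexHull ℝ _ ⟨i, hi, rfl⟩)
      have : ‖w₀ + t • (P - w₀) - y i‖ ^ 2 < ‖w₀ - y i‖ ^ 2 := by gcongr
      linarith [show ‖w₀ - y i‖ ^ 2 - r i = M from hi]
    · have hcont : Continuous fun t : ℝ => ‖w₀ + t • (P - w₀) - y i‖ ^ 2 - r i := by fun_prop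
      refine nhdsWithin_le_nhds (hcont.continuousAt.eventually_lt continuousAt_const ?_)
      simpa using (hle i).lt_of_ne hi
  obtain ⟨t, ⟨ht0, ht1⟩, hlt⟩ := hnear.exists
  have hPK : P ∈ K := convexHull_min (image_subset_iff.2 fun i _ => hyK i) hK hPC
  have hmem : w₀ + t • (P - w₀) ∈ K := by
    rw [show w₀ + t • (P - w₀) = (1 - t) • w₀ + t • P by module]
    exact hK hw₀ hPK (by linarith) ht0.le (by ring)
  obtain ⟨i, hi⟩ := hmin _ hmem
  exact (hlt i).not_ge hi

theorem exists_forall_norm_sub_le_of_fintype {κ : Type*} [Fintype κ] (a y : κ → H)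
    (hk : ∀ i j, ‖y i - y j‖ ≤ ‖a i - a j‖) (ζ : H) :
    ∃ w, ∀ i, ‖w - y i‖ ≤ ‖ζ - a i‖ := by
  cases isEmpty_or_nonempty κ
  · exact ⟨0, isEmptyElim⟩
  let f : H → κ → ℝ := fun w i => ‖w - y i‖ ^ 2 - ‖ζ - a i‖ ^ 2
  let φ : H → ℝ := fun w => Finset.univ.sup' Finset.univ_nonempty (f w)
  have hφ : Continuous φ := Continuous.finset_sup'_apply _ fun i _ => by fun_prop
  obtain ⟨w₀, hw₀K, hmin⟩ := ((finite_range y).isCompact_convexHull (𝕜 := ℝ)).exists_isMinOn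
    ((range_nonempty y).mono (subset_convexHull ℝ _)) hφ.continuousOn
  have hle : ∀ i, f w₀ i ≤ φ w₀ := fun i => Finset.le_sup' (f w₀) (Finset.mem_univ i)
  suffices hM : φ w₀ ≤ 0 from ⟨w₀, fun i =>
    le_of_pow_le_pow_left₀ two_ne_zero (norm_nonneg _) (by linarith [hle i])⟩
  by_contra! hM
  have hw₀T := mem_convexHull_active_of_minimax (convex_convexHull ℝ _)
    (fun i => subset_convexHull ℝ _ (mem_range_self i)) hw₀K hle fun w hw => by
      obtain ⟨i, -, hi⟩ := Finset.exists_mem_eq_sup' Finset.univ_nonempty (f w)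
      exact ⟨i, (hmin hw).trans_eq hi⟩
  obtain ⟨ι, _, c, z, hc0, hc1, hz, hcz⟩ := mem_convexHull_iff_exists_fintype.1 hw₀T
  choose idx hidxT hidxy using hz
  have hkey := sum_mul_norm_sub_sq_le_of_norm_sub_le hc0 hc1
    (a := a ∘ idx) (y := y ∘ idx) (fun i j => hk _ _) ζ
  -- the weights sit on active indices, so the left side of `hkey` exceeds the right by `φ w₀`
  have hactive : ∀ i, c i * ‖w₀ - z i‖ ^ 2 = c i * ‖ζ - a (idx i)‖ ^ 2 + c i * φ w₀ := by
    intro i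
    have : f w₀ (idx i) = φ w₀ := hidxT i
    simp only [f, hidxy] at this
    rw [← this]
    ring
  simp only [Function.comp_apply, hidxy, hcz, hactive, Finset.sum_add_distrib, ← Finset.sum_mul,
    hc1] at hkey
  linarith

theorem exists_forall_norm_sub_le [CompleteSpace H] {ι : Type*} (a y : ι → H)
    (hk : ∀ i j, ‖y i - y j‖ ≤ ‖a i - a j‖) (ζ : H) :
    ∃ w, ∀ i, ‖w - y i‖ ≤ ‖ζ - a i‖ := by
  obtain ⟨w, hw⟩ := nonempty_iInter_of_convex_of_isClosed_of_isBounded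
    (t := fun i => Metric.closedBall (y i) ‖ζ - a i‖) (fun _ => convex_closedBall _ _)
    (fun _ => Metric.isClosed_closedBall) (fun _ => Metric.isBounded_closedBall) fun F => by
      obtain ⟨w, hw⟩ := exists_forall_norm_sub_le_of_fintype (κ := F) (a ∘ (↑)) (y ∘ (↑))
        (fun i j => hk i j) ζ
      exact ⟨w, mem_iInter₂.2 fun i hi => mem_closedBall_iff_norm.2 (hw ⟨i, hi⟩)⟩
  exact ⟨w, fun i => mem_closedBall_iff_norm.1 (mem_iInter.1 hw i)⟩

end Kirszbraun

section Relations

variable {H : Type*} [NormedAddCommGroup H] [InnerProductSpace ℝ H]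

def cayleyTransform (μ : ℝ) (p : H × H) : H × H :=
  (p.1 + p.2, (1 + 2 * μ) • p.1 - p.2)

theorem norm_sq_cayleyTransform_sub (μ : ℝ) (p p' : H × H) :
    ‖(cayleyTransform μ p).1 - (cayleyTransform μ p').1‖ ^ 2
        - ‖(cayleyTransform μ p).2 - (cayleyTransform μ p').2‖ ^ 2
      = 4 * (1 + μ) * (⟪p.2 - p'.2, p.1 - p'.1⟫ - μ * ‖p.1 - p'.1‖ ^ 2) := by
  have h₁ : (cayleyTransform μ p).1 - (cayleyTransform μ p').1 = (p.1 - p'.1) + (p.2 - p'.2) := by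
    simp only [cayleyTransform]; abel
  have h₂ : (cayleyTransform μ p).2 - (cayleyTransform μ p').2
      = (1 + 2 * μ) • (p.1 - p'.1) - (p.2 - p'.2) := by
    simp only [cayleyTransform, smul_sub]; abel
  rw [h₁, h₂]
  generalize p.1 - p'.1 = d
  generalize p.2 - p'.2 = e
  rw [norm_add_sq_real, norm_sub_sq_real, norm_smul, real_inner_smul_left, Real.norm_eq_abs,
    mul_pow, sq_abs, real_inner_comm d]
  ring

theorem le_inner_iff_norm_cayleyTransform_sub_le {μ : ℝ} (hμ : -1 < μ) (p p' : H × H) :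
    μ * ‖p.1 - p'.1‖ ^ 2 ≤ ⟪p.2 - p'.2, p.1 - p'.1⟫ ↔
      ‖(cayleyTransform μ p).2 - (cayleyTransform μ p').2‖
        ≤ ‖(cayleyTransform μ p).1 - (cayleyTransform μ p').1‖ := by
  rw [← sq_le_sq₀ (norm_nonneg _) (norm_nonneg _),
    ← sub_nonneg (b := ‖(cayleyTransform μ p).2 - (cayleyTransform μ p').2‖ ^ 2),
    norm_sq_cayleyTransform_sub, mul_nonneg_iff_of_pos_left (by linarith), sub_nonneg]

theorem StronglyMonotoneRel.monotoneRel {μ : ℝ} (hμ : 0 ≤ μ) {A : Set (H × H)}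
    (hA : StronglyMonotoneRel μ A) : MonotoneRel A :=
  fun p hp p' hp' => le_trans (by positivity) (hA p hp p' hp')

theorem StronglyMonotoneRel.insert {μ : ℝ} {A : Set (H × H)} (hA : StronglyMonotoneRel μ A)
    {p : H × H} (hp : ∀ p' ∈ A, μ * ‖p.1 - p'.1‖ ^ 2 ≤ ⟪p.2 - p'.2, p.1 - p'.1⟫) :
    StronglyMonotoneRel μ (insert p A) := by
  rintro r (rfl | hr) r' (rfl | hr')
  · simp
  · exact hp r' hr'
  · rw [← neg_sub, ← neg_sub r'.1 r.1, inner_neg_neg, norm_neg]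
    exact hp r hr
  · exact hA r hr r' hr'

theorem StronglyMonotoneRel.exists_maximal {μ : ℝ} {A₀ : Set (H × H)}
    (hA₀ : StronglyMonotoneRel μ A₀) : ∃ A, A₀ ⊆ A ∧ Maximal (StronglyMonotoneRel μ) A :=
  zorn_subset_nonempty {A | StronglyMonotoneRel μ A} (fun c hc hchain _ => by
    refine ⟨⋃₀ c, ?_, fun s hs => subset_sUnion_of_mem hs⟩
    rintro p ⟨s, hs, hps⟩ p' ⟨s', hs', hps'⟩
    rcases hchain.total hs hs' with h | h
    · exact hc hs' p (h hps) p' hps'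
    · exact hc hs p hps p' (h hps')) A₀ hA₀

theorem MonotoneRel.maximalMonotoneRel_of_forall_exists_add_eq {A : Set (H × H)}
    (hA : MonotoneRel A) (hsurj : ∀ z, ∃ p ∈ A, p.1 + p.2 = z) : MaximalMonotoneRel A := by
  refine ⟨hA, fun B hB hAB => Subset.antisymm ?_ hAB⟩
  intro r hr
  obtain ⟨p, hpA, hp⟩ := hsurj (r.1 + r.2)
  have hsnd : r.2 - p.2 = -(r.1 - p.1) := by
    rw [neg_sub, sub_eq_sub_iff_add_eq_add, add_comm, hp]
  have h := hB r hr p (hAB hpA)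
  rw [hsnd, inner_neg_left, real_inner_self_eq_norm_sq] at h
  have hfst : r.1 = p.1 := sub_eq_zero.1 (norm_eq_zero.1 (by nlinarith [norm_nonneg (r.1 - p.1)]))
  have : r = p := Prod.ext hfst (by rw [← sub_eq_zero, hsnd, hfst, sub_self, neg_zero])
  exact this ▸ hpA

theorem exists_mem_fst_add_snd_eq_of_maximal_stronglyMonotoneRel [CompleteSpace H] {μ : ℝ}
    (hμ : -1 < μ) {A : Set (H × H)} (hA : Maximal (StronglyMonotoneRel μ) A) (z : H) :
    ∃ p ∈ A, p.1 + p.2 = z := by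
  obtain ⟨w, hw⟩ := exists_forall_norm_sub_le (ι := A) (fun p => (cayleyTransform μ p).1)
    (fun p => (cayleyTransform μ p).2)
    (fun p p' => (le_inner_iff_norm_cayleyTransform_sub_le hμ (p : H × H) p').1
      (hA.prop p p.2 p' p'.2)) z
  set x : H := (2 * (1 + μ))⁻¹ • (z + w)
  have hx : (2 * (1 + μ)) • x = z + w := by
    rw [smul_smul, mul_inv_cancel₀ (by linarith), one_smul]
  have hcayley : cayleyTransform μ (x, z - x) = (z, w) := by
    have : (1 + 2 * μ) • x - (z - x) = (2 * (1 + μ)) • x - z := by module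
    simp only [cayleyTransform, add_sub_cancel, this, hx, add_sub_cancel_left]
  refine ⟨(x, z - x), hA.mem_of_prop_insert (hA.prop.insert fun p' hp' => ?_), add_sub_cancel _ _⟩
  rw [le_inner_iff_norm_cayleyTransform_sub_le hμ, hcayley]
  exact hw ⟨p', hp'⟩

end Relations

/-- Interpolation (extension) with the class `M_μ` of maximal `μ`-strongly monotone relations:
`{(xᵢ, qᵢ)}` extends to a maximal monotone, `μ`-strongly monotone relation iff
`⟨xᵢ − xⱼ, qᵢ − qⱼ⟩ ≥ μ‖xᵢ − xⱼ‖²` for all `i, j`. -/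
theorem mu_strongly_monotone_interpolation
    {H : Type*} [NormedAddCommGroup H] [InnerProductSpace ℝ H] [CompleteSpace H]
    {μ : ℝ} (hμ : 0 < μ) {ι : Type*} (x q : ι → H) :
    (∃ A : Set (H × H), MaximalMonotoneRel A ∧ StronglyMonotoneRel μ A ∧
        ∀ i, (x i, q i) ∈ A) ↔
      ∀ i j, ⟪x i - x j, q i - q j⟫ ≥ μ * ‖x i - x j‖ ^ 2 := by
  constructor
  · rintro ⟨A, -, hA, hxq⟩ i j
    rw [real_inner_comm]
    exact hA _ (hxq i) _ (hxq j)
  · intro h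
    have hdata : StronglyMonotoneRel μ (range fun i => (x i, q i)) := by
      rintro _ ⟨i, rfl⟩ _ ⟨j, rfl⟩
      rw [real_inner_comm]
      exact h i j
    obtain ⟨A, hdataA, hA⟩ := hdata.exists_maximal
    refine ⟨A, ?_, hA.prop, fun i => hdataA ⟨i, rfl⟩⟩
    exact (hA.prop.monotoneRel hμ.le).maximalMonotoneRel_of_forall_exists_add_eq
      (exists_mem_fst_add_snd_eq_of_maximal_stronglyMonotoneRel (by linarith) hA)
end

section
/- Let L ∈ (0,∞). Consider the three duplets in ℝ² × ℝ²: (x₁,q₁) = ((0,0),(0,0)), (x₂,q₂) = ((1,0),(0,0)), (x₃,q₃) = ((1/2,0),(0,L/2)). These satisfy ⟨x_i − x_j, q_i − q_j⟩ ≥ 0 and ‖q_i − q_j‖² ≤ L²‖x_i − x_j‖² for all i, j ∈ {1,2,3}, and yet there is no map Q : ℝ² → ℝ² that is monotone and L-Lipschitz with Q x₁ = q₁, Q x₂ = q₂ and Q x₃ = q₃. -/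
/-!
A monotone `L`-Lipschitz map `Q` taking the same value `c` at `a` and `b` also takes it at their
midpoint `m`: monotonicity against `a` and `b` gives `⟪Q (m + v) - c, v⟫ ≥ 0`, Lipschitz continuity
at `m` gives `⟪Q (m + v) - Q m, v⟫ ≤ L ‖v‖²`, so `⟪Q m - c, v⟫ ≥ -L ‖v‖²` for every `v`, which
forces `Q m = c`. The point `x₃` is the midpoint of `x₁` and `x₂`, and `q₁ = q₂ = 0 ≠ q₃`.
-/

open RealInnerProductSpace

section MonotoneLipschitz

variable {E : Type*} [NormedAddCommGroup E] [InnerProductSpace ℝ E] {Q : E → E} {L : ℝ}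

lemma inner_apply_midpoint_add_sub_nonneg (hQ : ∀ a b, 0 ≤ ⟪Q a - Q b, a - b⟫) {a b : E}
    (hab : Q a = Q b) (v : E) : 0 ≤ ⟪Q (midpoint ℝ a b + v) - Q a, v⟫ := by
  set p := midpoint ℝ a b + v
  have hpa := hQ p a
  have hpb := hQ p b
  rw [← hab] at hpb
  have hv : (p - a) + (p - b) = (2 : ℝ) • v := by
    simp only [p, midpoint_eq_smul_add, invOf_eq_inv]
    module
  have := inner_add_right (𝕜 := ℝ) (Q p - Q a) (p - a) (p - b)
  rw [hv, real_inner_smul_right] at this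
  linarith

lemma inner_apply_add_sub_le_mul_norm_sq (hQ : ∀ a b, ‖Q a - Q b‖ ≤ L * ‖a - b‖) (m v : E) :
    ⟪Q (m + v) - Q m, v⟫ ≤ L * ‖v‖ ^ 2 :=
  calc ⟪Q (m + v) - Q m, v⟫ ≤ ‖Q (m + v) - Q m‖ * ‖v‖ := real_inner_le_norm _ _
    _ ≤ L * ‖m + v - m‖ * ‖v‖ := by gcongr; exact hQ _ _
    _ = L * ‖v‖ ^ 2 := by rw [add_sub_cancel_left]; ring

lemma eq_zero_of_forall_neg_mul_norm_sq_le_inner {w : E} (h : ∀ v, -(L * ‖v‖ ^ 2) ≤ ⟪w, v⟫) :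
    w = 0 := by
  set t := (|L| + 1)⁻¹
  have ht : 0 < t := by positivity
  have hLt : L * t < 1 := by
    rw [mul_inv_lt_iff₀ (by positivity)]
    linarith [le_abs_self L]
  have hw := h (-t • w)
  rw [inner_smul_right, norm_smul, real_inner_self_eq_norm_sq, mul_pow, Real.norm_eq_abs,
    abs_neg, abs_of_pos ht] at hw
  by_contra hw0
  have := mul_pos (mul_pos ht (sub_pos.2 hLt)) (pow_pos (norm_pos_iff.2 hw0) 2)
  linarith

theorem apply_midpoint_eq_of_apply_eq (hmono : ∀ a b, 0 ≤ ⟪Q a - Q b, a - b⟫)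
    (hlip : ∀ a b, ‖Q a - Q b‖ ≤ L * ‖a - b‖) {a b : E} (hab : Q a = Q b) :
    Q (midpoint ℝ a b) = Q a := by
  rw [← sub_eq_zero]
  refine eq_zero_of_forall_neg_mul_norm_sq_le_inner (L := L) fun v => ?_
  have hmono_v := inner_apply_midpoint_add_sub_nonneg hmono hab v
  have hlip_v := inner_apply_add_sub_le_mul_norm_sq hlip (midpoint ℝ a b) v
  have : Q (midpoint ℝ a b) - Q a
      = (Q (midpoint ℝ a b + v) - Q a) - (Q (midpoint ℝ a b + v) - Q (midpoint ℝ a b)) := by abel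
  rw [this, inner_sub_left]
  linarith

end MonotoneLipschitz

/-- Failure of interpolation with the intersection `M ∩ L_L` (monotone and `L`-Lipschitz
maps): the three duplets `((0,0),(0,0))`, `((1,0),(0,0))`, `((1/2,0),(0,L/2))` in `ℝ²`
satisfy the monotonicity and Lipschitz interpolation inequalities pairwise, yet no monotone
`L`-Lipschitz map interpolates them. -/
theorem monotone_lipschitz_interpolation_failure
    {L : ℝ} (hL : 0 < L)
    (x q : Fin 3 → EuclideanSpace ℝ (Fin 2))
    (hx : x = ![(WithLp.equiv 2 (Fin 2 → ℝ)).symm ![0, 0],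
                (WithLp.equiv 2 (Fin 2 → ℝ)).symm ![1, 0],
                (WithLp.equiv 2 (Fin 2 → ℝ)).symm ![1/2, 0]])
    (hq : q = ![(WithLp.equiv 2 (Fin 2 → ℝ)).symm ![0, 0],
                (WithLp.equiv 2 (Fin 2 → ℝ)).symm ![0, 0],
                (WithLp.equiv 2 (Fin 2 → ℝ)).symm ![0, L/2]]) :
    (∀ i j, ⟪x i - x j, q i - q j⟫ ≥ 0) ∧
    (∀ i j, ‖q i - q j‖ ^ 2 ≤ L ^ 2 * ‖x i - x j‖ ^ 2) ∧
    ¬ ∃ Q : EuclideanSpace ℝ (Fin 2) → EuclideanSpace ℝ (Fin 2),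
        (∀ a b, ⟪Q a - Q b, a - b⟫ ≥ 0) ∧
        (∀ a b, ‖Q a - Q b‖ ≤ L * ‖a - b‖) ∧
        (∀ i, Q (x i) = q i) := by
  have hx₂ : x 2 = midpoint ℝ (x 0) (x 1) := by
    subst hx
    ext i
    fin_cases i <;> simp [midpoint_eq_smul_add]
  have hq₁ : q 0 = q 1 := by
    subst hq
    rfl
  have hq₂ : q 2 ≠ q 0 := by
    subst hq
    intro h
    exact hL.ne' (by simpa using congrArg (· 1) h)
  refine ⟨fun i j => ?_, fun i j => ?_, ?_⟩
  · subst hx hq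
    fin_cases i <;> fin_cases j <;> simp [PiLp.inner_apply, Fin.sum_univ_two]
  · subst hx hq
    fin_cases i <;> fin_cases j <;> simp [EuclideanSpace.norm_sq_eq, Fin.sum_univ_two] <;> nlinarith
  rintro ⟨Q, hmono, hlip, hQ⟩
  apply hq₂
  rw [← hQ 2, hx₂, apply_midpoint_eq_of_apply_eq hmono hlip (by rw [hQ 0, hQ 1, hq₁]), hQ 0]
end

section
/- Let H be a real Hilbert space and let μ, β, L ∈ (0,∞) satisfy μ ≤ L and μ·β ≤ 1. Let (x₁,q₁), (x₂,q₂) ∈ H × H. Then there exists a map Q : H → H that is μ-strongly monotone, β-cocoercive and L-Lipschitz with Q x₁ = q₁ and Q x₂ = q₂ if and only if the three inequalities hold: ⟨x₁ − x₂, q₁ − q₂⟩ ≥ μ‖x₁ − x₂‖², ⟨x₁ − x₂, q₁ − q₂⟩ ≥ β‖q₁ − q₂‖², and ‖q₁ − q₂‖² ≤ L²‖x₁ − x₂‖². -/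
/-!
Put `d = x₁ - x₂`, `e = q₁ - q₂` and look for an affine interpolant `x ↦ T (x - x₂) + q₂` with `T`
linear. Take `T = a • id + S` with `a = ⟪d, e⟫ / ‖d‖²` and the skew-adjoint
`S v = (⟪d, v⟫ • e - ⟪e, v⟫ • d) / ‖d‖²`. Then `T d = e`, `⟪T v, v⟫ = a ‖v‖²`, and
`‖d‖² ‖T v‖² ≤ ‖e‖² ‖v‖²` is the nonnegativity of the Gram determinant of `d, e, v`; so `T`
inherits the monotonicity, cocoercivity and Lipschitz constants of the pair. If `d = 0`, then
`e = 0` and `T = μ • id` works.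
-/

open RealInnerProductSpace

section

variable {H : Type*} [NormedAddCommGroup H] [InnerProductSpace ℝ H]

theorem det_gram_three_nonneg (u v w : H) :
    0 ≤ ‖u‖ ^ 2 * ‖v‖ ^ 2 * ‖w‖ ^ 2 + 2 * ⟪u, v⟫ * ⟪v, w⟫ * ⟪u, w⟫
      - ‖u‖ ^ 2 * ⟪v, w⟫ ^ 2 - ‖v‖ ^ 2 * ⟪u, w⟫ ^ 2 - ‖w‖ ^ 2 * ⟪u, v⟫ ^ 2 := by
  have h := (Matrix.posSemidef_gram ℝ ![u, v, w]).det_nonneg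
  rw [Matrix.det_fin_three] at h
  simp only [Matrix.gram_apply, Matrix.cons_val, real_inner_self_eq_norm_sq] at h
  simp only [real_inner_comm u v, real_inner_comm u w, real_inner_comm v w] at h
  linarith

noncomputable def twoPointMap (d e : H) : H →ₗ[ℝ] H :=
  (⟪d, e⟫ / ‖d‖ ^ 2) • LinearMap.id +
    (‖d‖ ^ 2)⁻¹ • ((innerₗ H d).smulRight e - (innerₗ H e).smulRight d)

section TwoPointMap

variable (d e v : H)

theorem twoPointMap_apply : twoPointMap d e v =
    (⟪d, e⟫ / ‖d‖ ^ 2) • v + (‖d‖ ^ 2)⁻¹ • (⟪d, v⟫ • e - ⟪e, v⟫ • d) := rfl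

theorem twoPointMap_self {d : H} (hd : d ≠ 0) : twoPointMap d e d = e := by
  have hD : ‖d‖ ^ 2 ≠ 0 := by positivity
  rw [twoPointMap_apply, real_inner_self_eq_norm_sq, real_inner_comm, smul_sub, smul_smul,
    smul_smul, inv_mul_cancel₀ hD, one_smul, div_eq_inv_mul, mul_comm, add_sub_cancel]

theorem inner_twoPointMap_self : ⟪twoPointMap d e v, v⟫ = ⟪d, e⟫ / ‖d‖ ^ 2 * ‖v‖ ^ 2 := by
  simp only [twoPointMap_apply, inner_add_left, inner_sub_left, real_inner_smul_left,
    real_inner_self_eq_norm_sq, real_inner_comm v d, real_inner_comm v e]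
  ring

theorem sq_norm_mul_sq_norm_twoPointMap_le :
    ‖d‖ ^ 2 * ‖twoPointMap d e v‖ ^ 2 ≤ ‖e‖ ^ 2 * ‖v‖ ^ 2 := by
  rcases eq_or_ne d 0 with rfl | hd
  · simpa using mul_nonneg (sq_nonneg ‖e‖) (sq_nonneg ‖v‖)
  have hD : 0 < ‖d‖ ^ 2 := by positivity
  have hsq : ‖d‖ ^ 2 * ‖twoPointMap d e v‖ ^ 2 =
      (⟪d, e⟫ ^ 2 * ‖v‖ ^ 2 + ⟪d, v⟫ ^ 2 * ‖e‖ ^ 2 - 2 * ⟪d, v⟫ * ⟪e, v⟫ * ⟪d, e⟫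
        + ⟪e, v⟫ ^ 2 * ‖d‖ ^ 2) / ‖d‖ ^ 2 := by
    rw [← real_inner_self_eq_norm_sq (twoPointMap d e v)]
    simp only [twoPointMap_apply, inner_add_left, inner_add_right, inner_sub_left,
      inner_sub_right, real_inner_smul_left, real_inner_smul_right]
    simp only [real_inner_self_eq_norm_sq, real_inner_comm v d, real_inner_comm v e,
      real_inner_comm e d]
    field_simp
    ring
  rw [hsq, div_le_iff₀ hD]
  nlinarith [det_gram_three_nonneg d e v]

end TwoPointMap

section Interpolation

variable {μ β L : ℝ}

theorem exists_interpolant_of_linear (T : H →ₗ[ℝ] H) {x₁ q₁ x₂ q₂ : H}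
    (hmono : ∀ v, μ * ‖v‖ ^ 2 ≤ ⟪T v, v⟫) (hcoco : ∀ v, β * ‖T v‖ ^ 2 ≤ ⟪T v, v⟫)
    (hlip : ∀ v, ‖T v‖ ≤ L * ‖v‖) (hT : T (x₁ - x₂) = q₁ - q₂) :
    ∃ Q : H → H,
      (∀ a b : H, ⟪Q a - Q b, a - b⟫ ≥ μ * ‖a - b‖ ^ 2) ∧
      (∀ a b : H, ⟪Q a - Q b, a - b⟫ ≥ β * ‖Q a - Q b‖ ^ 2) ∧
      (∀ a b : H, ‖Q a - Q b‖ ≤ L * ‖a - b‖) ∧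
      Q x₁ = q₁ ∧ Q x₂ = q₂ := by
  have hQ : ∀ a b : H, (T (a - x₂) + q₂) - (T (b - x₂) + q₂) = T (a - b) := fun a b => by
    rw [add_sub_add_right_eq_sub, ← map_sub, sub_sub_sub_cancel_right]
  refine ⟨fun x => T (x - x₂) + q₂, fun a b => ?_, fun a b => ?_, fun a b => ?_, ?_, ?_⟩
  · simpa only [hQ] using hmono (a - b)
  · simpa only [hQ] using hcoco (a - b)
  · simpa only [hQ] using hlip (a - b)
  · simp only [hT, sub_add_cancel]
  · simp only [sub_self, map_zero, zero_add]

theorem exists_linear_interpolant_of_ne_zero {d e : H} (hd : d ≠ 0) (hβ : 0 ≤ β) (hL : 0 ≤ L)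
    (h₁ : μ * ‖d‖ ^ 2 ≤ ⟪d, e⟫) (h₂ : β * ‖e‖ ^ 2 ≤ ⟪d, e⟫) (h₃ : ‖e‖ ^ 2 ≤ L ^ 2 * ‖d‖ ^ 2) :
    ∃ T : H →ₗ[ℝ] H, (∀ v, μ * ‖v‖ ^ 2 ≤ ⟪T v, v⟫) ∧ (∀ v, β * ‖T v‖ ^ 2 ≤ ⟪T v, v⟫) ∧
      (∀ v, ‖T v‖ ≤ L * ‖v‖) ∧ T d = e := by
  have hD : 0 < ‖d‖ ^ 2 := by positivity
  refine ⟨twoPointMap d e, fun v => ?_, fun v => ?_, fun v => ?_, twoPointMap_self e hd⟩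
  · rw [inner_twoPointMap_self]
    exact mul_le_mul_of_nonneg_right ((le_div_iff₀ hD).2 h₁) (sq_nonneg _)
  · have hT := sq_norm_mul_sq_norm_twoPointMap_le d e v
    rw [inner_twoPointMap_self, div_mul_eq_mul_div, le_div_iff₀ hD]
    nlinarith [mul_le_mul_of_nonneg_left hT hβ, mul_le_mul_of_nonneg_right h₂ (sq_nonneg ‖v‖)]
  · have hT := sq_norm_mul_sq_norm_twoPointMap_le d e v
    refine le_of_sq_le_sq ?_ (by positivity)
    rw [mul_pow, ← mul_le_mul_iff_right₀ hD]
    nlinarith [mul_le_mul_of_nonneg_right h₃ (sq_nonneg ‖v‖)]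

theorem exists_linear_interpolant {d e : H} (hμ : 0 ≤ μ) (hβ : 0 ≤ β) (hL : 0 ≤ L)
    (hμL : μ ≤ L) (hμβ : μ * β ≤ 1)
    (h₁ : μ * ‖d‖ ^ 2 ≤ ⟪d, e⟫) (h₂ : β * ‖e‖ ^ 2 ≤ ⟪d, e⟫) (h₃ : ‖e‖ ^ 2 ≤ L ^ 2 * ‖d‖ ^ 2) :
    ∃ T : H →ₗ[ℝ] H, (∀ v, μ * ‖v‖ ^ 2 ≤ ⟪T v, v⟫) ∧ (∀ v, β * ‖T v‖ ^ 2 ≤ ⟪T v, v⟫) ∧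
      (∀ v, ‖T v‖ ≤ L * ‖v‖) ∧ T d = e := by
  rcases eq_or_ne d 0 with rfl | hd
  · obtain rfl : e = 0 := by simpa using h₃
    refine ⟨μ • LinearMap.id, fun v => ?_, fun v => ?_, fun v => ?_, map_zero _⟩
    · simp [real_inner_smul_left]
    · simp only [LinearMap.smul_apply, LinearMap.id_apply, real_inner_smul_left,
        real_inner_self_eq_norm_sq, norm_smul, Real.norm_of_nonneg hμ]
      nlinarith [mul_le_mul_of_nonneg_right hμβ (mul_nonneg hμ (sq_nonneg ‖v‖))]
    · simp only [LinearMap.smul_apply, LinearMap.id_apply, norm_smul, Real.norm_of_nonneg hμ]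
      exact mul_le_mul_of_nonneg_right hμL (norm_nonneg v)
  · exact exists_linear_interpolant_of_ne_zero hd hβ hL h₁ h₂ h₃

end Interpolation

end

theorem two_point_interpolation_MCL_general
    {H : Type*} [NormedAddCommGroup H] [InnerProductSpace ℝ H]
    {μ β L : ℝ} (hμ : 0 < μ) (hβ : 0 < β) (hL : 0 < L) (hμL : μ ≤ L) (hμβ : μ * β ≤ 1)
    (x₁ q₁ x₂ q₂ : H) :
    (∃ Q : H → H,
        (∀ a b : H, ⟪Q a - Q b, a - b⟫ ≥ μ * ‖a - b‖ ^ 2) ∧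
        (∀ a b : H, ⟪Q a - Q b, a - b⟫ ≥ β * ‖Q a - Q b‖ ^ 2) ∧
        (∀ a b : H, ‖Q a - Q b‖ ≤ L * ‖a - b‖) ∧
        Q x₁ = q₁ ∧ Q x₂ = q₂) ↔
      (⟪x₁ - x₂, q₁ - q₂⟫ ≥ μ * ‖x₁ - x₂‖ ^ 2 ∧
       ⟪x₁ - x₂, q₁ - q₂⟫ ≥ β * ‖q₁ - q₂‖ ^ 2 ∧
       ‖q₁ - q₂‖ ^ 2 ≤ L ^ 2 * ‖x₁ - x₂‖ ^ 2) := by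
  constructor
  · rintro ⟨Q, hmono, hcoco, hlip, rfl, rfl⟩
    refine ⟨real_inner_comm (Q x₁ - Q x₂) _ ▸ hmono x₁ x₂,
      real_inner_comm (Q x₁ - Q x₂) _ ▸ hcoco x₁ x₂, ?_⟩
    rw [← mul_pow]
    exact pow_le_pow_left₀ (norm_nonneg _) (hlip x₁ x₂) 2
  · rintro ⟨h₁, h₂, h₃⟩
    obtain ⟨T, hmono, hcoco, hlip, hT⟩ :=
      exists_linear_interpolant hμ.le hβ.le hL.le hμL hμβ h₁ h₂ h₃
    exact exists_interpolant_of_linear T hmono hcoco hlip hT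

/-- Two-point interpolation with `M_μ ∩ C_β ∩ L_L`:
`{(x₁,q₁),(x₂,q₂)}` is interpolable by a `μ`-strongly monotone, `β`-cocoercive and
`L`-Lipschitz map iff the three corresponding inequalities hold. -/
theorem two_point_interpolation_MCL
    {H : Type*} [NormedAddCommGroup H] [InnerProductSpace ℝ H] [CompleteSpace H]
    {μ β L : ℝ} (hμ : 0 < μ) (hβ : 0 < β) (hL : 0 < L) (hμL : μ ≤ L) (hμβ : μ * β ≤ 1)
    (x₁ q₁ x₂ q₂ : H) :
    (∃ Q : H → H,
        (∀ a b : H, ⟪Q a - Q b, a - b⟫ ≥ μ * ‖a - b‖ ^ 2) ∧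
        (∀ a b : H, ⟪Q a - Q b, a - b⟫ ≥ β * ‖Q a - Q b‖ ^ 2) ∧
        (∀ a b : H, ‖Q a - Q b‖ ≤ L * ‖a - b‖) ∧
        Q x₁ = q₁ ∧ Q x₂ = q₂) ↔
      (⟪x₁ - x₂, q₁ - q₂⟫ ≥ μ * ‖x₁ - x₂‖ ^ 2 ∧
       ⟪x₁ - x₂, q₁ - q₂⟫ ≥ β * ‖q₁ - q₂‖ ^ 2 ∧
       ‖q₁ - q₂‖ ^ 2 ≤ L ^ 2 * ‖x₁ - x₂‖ ^ 2) :=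
  two_point_interpolation_MCL_general hμ hβ hL hμL hμβ x₁ q₁ x₂ q₂
end

section
/- Let H be a real Hilbert space and let β, L ∈ (0,∞). Let (x₁,q₁), (x₂,q₂) ∈ H × H. Then there exists a map Q : H → H that is β-cocoercive and L-Lipschitz with Q x₁ = q₁ and Q x₂ = q₂ if and only if ⟨x₁ − x₂, q₁ − q₂⟩ ≥ β‖q₁ − q₂‖² and ‖q₁ − q₂‖² ≤ L²‖x₁ − x₂‖². -/
/-!
Necessity is evaluation at the two points. For sufficiency put `v = x₁ - x₂`, `D = q₁ - q₂` and
take the affine map `Q x = q₂ + A (x - x₂)` with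
`A = (⟪v, D⟫ / ‖v‖²) • id + ‖v‖⁻² • (v ∧ D)`, where `(v ∧ D) u = ⟪v, u⟫ D - ⟪D, u⟫ v` is skew.
Then `A v = D`, `⟪A u, u⟫ = ⟪v, D⟫ ‖u‖² / ‖v‖²`, and by Pythagoras and the nonnegativity of the
Gram determinant of `v, D, u`, `‖A u‖² ≤ ‖D‖² ‖u‖² / ‖v‖²`. So the two inequalities at the pair
`(x₁, x₂)` carry over to every pair of points.
-/

open RealInnerProductSpace

section

variable {H : Type*} [NormedAddCommGroup H] [InnerProductSpace ℝ H]

noncomputable def wedgeMap (v w : H) : H →L[ℝ] H :=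
  (innerSL ℝ v).smulRight w - (innerSL ℝ w).smulRight v

@[simp]
theorem wedgeMap_apply (v w u : H) : wedgeMap v w u = ⟪v, u⟫ • w - ⟪w, u⟫ • v := rfl

theorem inner_wedgeMap_apply_self (v w u : H) : ⟪wedgeMap v w u, u⟫ = 0 := by
  rw [wedgeMap_apply, inner_sub_left, real_inner_smul_left, real_inner_smul_left]
  ring

theorem norm_wedgeMap_apply_sq_le (v w u : H) :
    ‖wedgeMap v w u‖ ^ 2 ≤ (‖v‖ ^ 2 * ‖w‖ ^ 2 - ⟪v, w⟫ ^ 2) * ‖u‖ ^ 2 := by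
  have hdet := (Matrix.posSemidef_gram ℝ ![v, w, u]).det_nonneg
  simp only [Matrix.det_fin_three, Matrix.gram_apply, Matrix.cons_val_zero, Matrix.cons_val_one,
    Matrix.cons_val, real_inner_self_eq_norm_sq, sub_nonneg] at hdet
  rw [wedgeMap_apply, norm_sub_sq_real, norm_smul, norm_smul, real_inner_smul_left,
    real_inner_smul_right, mul_pow, mul_pow, Real.norm_eq_abs, Real.norm_eq_abs, sq_abs, sq_abs]
  rw [real_inner_comm v u, real_inner_comm w u, real_inner_comm v w] at hdet
  rw [real_inner_comm v w]
  linear_combination hdet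

noncomputable def interpolatingMap (v D : H) : H →L[ℝ] H :=
  (⟪v, D⟫ / ‖v‖ ^ 2) • ContinuousLinearMap.id ℝ H + (‖v‖ ^ 2)⁻¹ • wedgeMap v D

theorem interpolatingMap_apply (v D u : H) :
    interpolatingMap v D u = (⟪v, D⟫ / ‖v‖ ^ 2) • u + (‖v‖ ^ 2)⁻¹ • wedgeMap v D u := rfl

theorem interpolatingMap_apply_self {v : H} (hv : v ≠ 0) (D : H) :
    interpolatingMap v D v = D := by
  have hρ : ‖v‖ ^ 2 ≠ 0 := by positivity
  rw [interpolatingMap_apply, wedgeMap_apply, real_inner_self_eq_norm_sq, real_inner_comm,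
    smul_sub, smul_smul, smul_smul, inv_mul_cancel₀ hρ, one_smul]
  module

theorem inner_interpolatingMap_apply_self (v D u : H) :
    ⟪interpolatingMap v D u, u⟫ = ⟪v, D⟫ / ‖v‖ ^ 2 * ‖u‖ ^ 2 := by
  rw [interpolatingMap_apply, inner_add_left, real_inner_smul_left, real_inner_smul_left,
    inner_wedgeMap_apply_self, real_inner_self_eq_norm_sq, mul_zero, add_zero]

theorem norm_interpolatingMap_apply_sq_le (v D u : H) :
    ‖interpolatingMap v D u‖ ^ 2 ≤ ‖D‖ ^ 2 / ‖v‖ ^ 2 * ‖u‖ ^ 2 := by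
  rcases eq_or_ne v 0 with rfl | hv
  · simp [interpolatingMap_apply]
  have hρ : 0 < ‖v‖ ^ 2 := by positivity
  have hpyth : ‖interpolatingMap v D u‖ ^ 2
      = (⟪v, D⟫ / ‖v‖ ^ 2) ^ 2 * ‖u‖ ^ 2 + ((‖v‖ ^ 2)⁻¹) ^ 2 * ‖wedgeMap v D u‖ ^ 2 := by
    rw [interpolatingMap_apply, norm_add_sq_real, real_inner_smul_left, real_inner_smul_right,
      real_inner_comm (wedgeMap v D u), inner_wedgeMap_apply_self, norm_smul, norm_smul,
      mul_pow, mul_pow, Real.norm_eq_abs, Real.norm_eq_abs, sq_abs, sq_abs]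
    ring
  calc ‖interpolatingMap v D u‖ ^ 2
      ≤ (⟪v, D⟫ / ‖v‖ ^ 2) ^ 2 * ‖u‖ ^ 2
        + ((‖v‖ ^ 2)⁻¹) ^ 2 * ((‖v‖ ^ 2 * ‖D‖ ^ 2 - ⟪v, D⟫ ^ 2) * ‖u‖ ^ 2) := by
        rw [hpyth]; gcongr; exact norm_wedgeMap_apply_sq_le v D u
    _ = ‖D‖ ^ 2 / ‖v‖ ^ 2 * ‖u‖ ^ 2 := by field_simp; ring

theorem exists_linear_cocoercive_lipschitz_apply_eq {β L : ℝ} (hβ : 0 ≤ β) (hL : 0 ≤ L)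
    {v D : H} (hcoco : β * ‖D‖ ^ 2 ≤ ⟪v, D⟫) (hlip : ‖D‖ ^ 2 ≤ L ^ 2 * ‖v‖ ^ 2) :
    ∃ A : H →L[ℝ] H, A v = D ∧ (∀ u, β * ‖A u‖ ^ 2 ≤ ⟪A u, u⟫) ∧ ∀ u, ‖A u‖ ≤ L * ‖u‖ := by
  rcases eq_or_ne v 0 with rfl | hv
  · have hD : D = 0 := by simpa using hlip
    refine ⟨0, hD.symm, by simp, fun u => ?_⟩
    rw [zero_apply, norm_zero]
    positivity
  have hρ : 0 < ‖v‖ ^ 2 := by positivity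
  refine ⟨interpolatingMap v D, interpolatingMap_apply_self hv D, fun u => ?_, fun u => ?_⟩
  · rw [inner_interpolatingMap_apply_self]
    calc β * ‖interpolatingMap v D u‖ ^ 2 ≤ β * (‖D‖ ^ 2 / ‖v‖ ^ 2 * ‖u‖ ^ 2) := by
          gcongr; exact norm_interpolatingMap_apply_sq_le v D u
      _ ≤ ⟪v, D⟫ / ‖v‖ ^ 2 * ‖u‖ ^ 2 := by
          rw [← mul_assoc, mul_div_assoc']; gcongr
  · refine le_of_sq_le_sq ?_ (by positivity)
    calc ‖interpolatingMap v D u‖ ^ 2 ≤ ‖D‖ ^ 2 / ‖v‖ ^ 2 * ‖u‖ ^ 2 :=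
          norm_interpolatingMap_apply_sq_le v D u
      _ ≤ L ^ 2 * ‖u‖ ^ 2 := by gcongr; rwa [div_le_iff₀ hρ]
      _ = (L * ‖u‖) ^ 2 := by ring

end

theorem two_point_interpolation_CL_general
    {H : Type*} [NormedAddCommGroup H] [InnerProductSpace ℝ H]
    {β L : ℝ} (hβ : 0 < β) (hL : 0 < L)
    (x₁ q₁ x₂ q₂ : H) :
    (∃ Q : H → H,
        (∀ a b : H, ⟪Q a - Q b, a - b⟫ ≥ β * ‖Q a - Q b‖ ^ 2) ∧
        (∀ a b : H, ‖Q a - Q b‖ ≤ L * ‖a - b‖) ∧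
        Q x₁ = q₁ ∧ Q x₂ = q₂) ↔
      (⟪x₁ - x₂, q₁ - q₂⟫ ≥ β * ‖q₁ - q₂‖ ^ 2 ∧
       ‖q₁ - q₂‖ ^ 2 ≤ L ^ 2 * ‖x₁ - x₂‖ ^ 2) := by
  constructor
  · rintro ⟨Q, hcoco, hlip, rfl, rfl⟩
    refine ⟨real_inner_comm (Q x₁ - Q x₂) (x₁ - x₂) ▸ hcoco x₁ x₂, ?_⟩
    rw [← mul_pow]
    exact pow_le_pow_left₀ (norm_nonneg _) (hlip x₁ x₂) 2
  · rintro ⟨hcoco, hlip⟩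
    obtain ⟨A, hA, hAcoco, hAlip⟩ :=
      exists_linear_cocoercive_lipschitz_apply_eq hβ.le hL.le hcoco hlip
    have hsub : ∀ a b, (q₂ + A (a - x₂)) - (q₂ + A (b - x₂)) = A (a - b) := fun a b => by
      rw [add_sub_add_left_eq_sub, ← map_sub, sub_sub_sub_cancel_right]
    refine ⟨fun x => q₂ + A (x - x₂), fun a b => ?_, fun a b => ?_, ?_, ?_⟩
    · rw [hsub]; exact hAcoco (a - b)
    · rw [hsub]; exact hAlip (a - b)
    · simp only [hA, add_sub_cancel]
    · simp only [sub_self, map_zero, add_zero]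

/-- Two-point interpolation with `C_β ∩ L_L`: `{(x₁,q₁),(x₂,q₂)}` is interpolable by a
`β`-cocoercive and `L`-Lipschitz map iff the two corresponding inequalities hold. -/
theorem two_point_interpolation_CL
    {H : Type*} [NormedAddCommGroup H] [InnerProductSpace ℝ H] [CompleteSpace H]
    {β L : ℝ} (hβ : 0 < β) (hL : 0 < L)
    (x₁ q₁ x₂ q₂ : H) :
    (∃ Q : H → H,
        (∀ a b : H, ⟪Q a - Q b, a - b⟫ ≥ β * ‖Q a - Q b‖ ^ 2) ∧
        (∀ a b : H, ‖Q a - Q b‖ ≤ L * ‖a - b‖) ∧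
        Q x₁ = q₁ ∧ Q x₂ = q₂) ↔
      (⟪x₁ - x₂, q₁ - q₂⟫ ≥ β * ‖q₁ - q₂‖ ^ 2 ∧
       ‖q₁ - q₂‖ ^ 2 ≤ L ^ 2 * ‖x₁ - x₂‖ ^ 2) :=
  two_point_interpolation_CL_general hβ hL x₁ q₁ x₂ q₂
end

section
/- Let H be a real Hilbert space and let μ, L ∈ (0,∞) satisfy μ ≤ L. Let (x₁,q₁), (x₂,q₂) ∈ H × H. Then there exists a map Q : H → H that is μ-strongly monotone and L-Lipschitz with Q x₁ = q₁ and Q x₂ = q₂ if and only if ⟨x₁ − x₂, q₁ − q₂⟩ ≥ μ‖x₁ − x₂‖² and ‖q₁ − q₂‖² ≤ L²‖x₁ − x₂‖². -/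
open RealInnerProductSpace

/-! Necessity is the two defining inequalities at the pair `x₁, x₂`. For sufficiency take
`Q x = A (x - x₂) + q₂` with `A` linear. Put `d = x₁ - x₂`, `e = q₁ - q₂` and split
`e = α • d + w` with `w ⊥ d`, `α = ⟪d, e⟫ / ‖d‖²`; then `A = α • id + ‖d‖⁻² • (d ∧ w)`, where
`d ∧ w` is the skew operator `v ↦ ⟪d, v⟫ • w - ⟪w, v⟫ • d`. Skewness gives
`⟪A v, v⟫ = α ‖v‖² ≥ μ ‖v‖²`, and Bessel's inequality for the orthogonal pair `d, w` gives
`‖A v‖ ≤ ‖e‖ / ‖d‖ * ‖v‖ ≤ L ‖v‖`. If `d = 0` the conditions force `e = 0` and `A = μ • id` works. -/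

section

variable {H : Type*} [NormedAddCommGroup H] [InnerProductSpace ℝ H]

noncomputable def wedgeCLM (d w : H) : H →L[ℝ] H :=
  (innerSL ℝ d).smulRight w - (innerSL ℝ w).smulRight d

@[simp]
theorem wedgeCLM_apply (d w v : H) : wedgeCLM d w v = ⟪d, v⟫ • w - ⟪w, v⟫ • d := by
  simp [wedgeCLM]

theorem inner_wedgeCLM_apply_self (d w v : H) : ⟪wedgeCLM d w v, v⟫ = 0 := by
  simp only [wedgeCLM_apply, inner_sub_left, real_inner_smul_left]
  ring

variable {d w : H}

theorem wedgeCLM_apply_left (h : ⟪d, w⟫ = 0) : wedgeCLM d w d = ‖d‖ ^ 2 • w := by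
  rw [wedgeCLM_apply, real_inner_self_eq_norm_sq, real_inner_comm, h, zero_smul, sub_zero]

theorem norm_wedgeCLM_apply_sq (h : ⟪d, w⟫ = 0) (v : H) :
    ‖wedgeCLM d w v‖ ^ 2 = ⟪d, v⟫ ^ 2 * ‖w‖ ^ 2 + ⟪w, v⟫ ^ 2 * ‖d‖ ^ 2 := by
  have h' : ⟪w, d⟫ = 0 := by rw [real_inner_comm, h]
  rw [← real_inner_self_eq_norm_sq, wedgeCLM_apply]
  simp only [inner_sub_left, inner_sub_right, real_inner_smul_left, real_inner_smul_right,
    real_inner_self_eq_norm_sq, norm_smul, mul_pow, Real.norm_eq_abs, sq_abs, h, h']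
  ring

/-- Bessel's inequality for the orthogonal pair `d, w`, cleared of denominators. -/
theorem inner_sq_mul_add_inner_sq_mul_le (h : ⟪d, w⟫ = 0) (v : H) :
    ⟪d, v⟫ ^ 2 * ‖w‖ ^ 2 + ⟪w, v⟫ ^ 2 * ‖d‖ ^ 2 ≤ ‖d‖ ^ 2 * ‖w‖ ^ 2 * ‖v‖ ^ 2 := by
  set N := ⟪d, v⟫ ^ 2 * ‖w‖ ^ 2 + ⟪w, v⟫ ^ 2 * ‖d‖ ^ 2
  have h' : ⟪w, d⟫ = 0 := by rw [real_inner_comm, h]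
  set u := (⟪d, v⟫ * ‖w‖ ^ 2) • d + (⟪w, v⟫ * ‖d‖ ^ 2) • w
  have hu : ⟪u, v⟫ = N := by
    simp only [u, N, inner_add_left, real_inner_smul_left]
    ring
  have hu' : ‖u‖ ^ 2 = ‖d‖ ^ 2 * ‖w‖ ^ 2 * N := by
    rw [← real_inner_self_eq_norm_sq]
    simp only [u, N, inner_add_left, inner_add_right, real_inner_smul_left, real_inner_smul_right,
      real_inner_self_eq_norm_sq, norm_smul, mul_pow, Real.norm_eq_abs, sq_abs, h, h']
    ring
  -- Cauchy–Schwarz for `u` and `v`, then cancel one factor `N`.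
  have hcs : N ^ 2 ≤ ‖u‖ ^ 2 * ‖v‖ ^ 2 := by
    rw [← hu, ← mul_pow, ← sq_abs]
    exact pow_le_pow_left₀ (abs_nonneg _) (abs_real_inner_le_norm u v) 2
  rw [hu'] at hcs
  rcases (show 0 ≤ N by positivity).eq_or_lt with hN | hN
  · rw [← hN]; positivity
  · nlinarith

theorem norm_wedgeCLM_apply_le (h : ⟪d, w⟫ = 0) (v : H) :
    ‖wedgeCLM d w v‖ ≤ ‖d‖ * ‖w‖ * ‖v‖ := by
  rw [← sq_le_sq₀ (norm_nonneg _) (by positivity), norm_wedgeCLM_apply_sq h, mul_pow, mul_pow]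
  exact inner_sq_mul_add_inner_sq_mul_le h v

theorem exists_clm_apply_eq_of_ne_zero {d : H} (hd : d ≠ 0) (e : H) :
    ∃ A : H →L[ℝ] H, A d = e ∧ (∀ v, ⟪A v, v⟫ = ⟪d, e⟫ / ‖d‖ ^ 2 * ‖v‖ ^ 2) ∧
      ∀ v, ‖d‖ * ‖A v‖ ≤ ‖e‖ * ‖v‖ := by
  have hd2 : ‖d‖ ^ 2 ≠ 0 := by positivity
  set α := ⟪d, e⟫ / ‖d‖ ^ 2
  set w := e - α • d
  have hdw : ⟪d, w⟫ = 0 := by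
    simp only [w, α, inner_sub_right, real_inner_smul_right, real_inner_self_eq_norm_sq]
    field_simp
    ring
  have he : ‖e‖ ^ 2 = α ^ 2 * ‖d‖ ^ 2 + ‖w‖ ^ 2 := by
    rw [show e = α • d + w by simp [w], norm_add_sq_real, real_inner_smul_left, hdw, norm_smul,
      mul_pow, Real.norm_eq_abs, sq_abs]
    ring
  set A := α • ContinuousLinearMap.id ℝ H + (‖d‖ ^ 2)⁻¹ • wedgeCLM d w
  have hA (v : H) : A v = α • v + (‖d‖ ^ 2)⁻¹ • wedgeCLM d w v := rfl
  refine ⟨A, ?_, fun v => ?_, fun v => ?_⟩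
  · rw [hA, wedgeCLM_apply_left hdw, smul_smul, inv_mul_cancel₀ hd2, one_smul, add_sub_cancel]
  · rw [hA, inner_add_left, real_inner_smul_left, real_inner_smul_left, inner_wedgeCLM_apply_self,
      real_inner_self_eq_norm_sq, mul_zero, add_zero]
  · have horth : ⟪α • v, (‖d‖ ^ 2)⁻¹ • wedgeCLM d w v⟫ = 0 := by
      rw [real_inner_smul_left, real_inner_smul_right, real_inner_comm, inner_wedgeCLM_apply_self,
        mul_zero, mul_zero]
    rw [← sq_le_sq₀ (by positivity) (by positivity)]
    calc (‖d‖ * ‖A v‖) ^ 2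
        = ‖d‖ ^ 2 * (α ^ 2 * ‖v‖ ^ 2) + (‖d‖ ^ 2)⁻¹ * ‖wedgeCLM d w v‖ ^ 2 := by
          rw [hA, mul_pow, norm_add_sq_real, horth, norm_smul, norm_smul, Real.norm_eq_abs,
            Real.norm_eq_abs, abs_inv, abs_of_nonneg (sq_nonneg ‖d‖), mul_pow, sq_abs]
          field_simp
          ring
      _ ≤ ‖d‖ ^ 2 * (α ^ 2 * ‖v‖ ^ 2) + (‖d‖ ^ 2)⁻¹ * (‖d‖ * ‖w‖ * ‖v‖) ^ 2 := by
          gcongr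
          exact norm_wedgeCLM_apply_le hdw v
      _ = (‖e‖ * ‖v‖) ^ 2 := by
          rw [mul_pow ‖e‖, he]
          field_simp

theorem exists_clm_apply_eq_strongMonotone_lipschitz {μ L : ℝ} (hμ : 0 ≤ μ) (hμL : μ ≤ L)
    {d e : H} (hde : μ * ‖d‖ ^ 2 ≤ ⟪d, e⟫) (he : ‖e‖ ≤ L * ‖d‖) :
    ∃ A : H →L[ℝ] H, A d = e ∧ (∀ v, μ * ‖v‖ ^ 2 ≤ ⟪A v, v⟫) ∧ ∀ v, ‖A v‖ ≤ L * ‖v‖ := by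
  rcases eq_or_ne d 0 with rfl | hd
  · refine ⟨μ • ContinuousLinearMap.id ℝ H, ?_, fun v => ?_, fun v => ?_⟩
    · simpa [eq_comm] using he
    · simp [real_inner_smul_left]
    · simpa [norm_smul, abs_of_nonneg hμ] using mul_le_mul_of_nonneg_right hμL (norm_nonneg v)
  obtain ⟨A, hAd, hAinner, hAnorm⟩ := exists_clm_apply_eq_of_ne_zero hd e
  have hd' : 0 < ‖d‖ := norm_pos_iff.mpr hd
  refine ⟨A, hAd, fun v => ?_, fun v => ?_⟩
  · rw [hAinner]
    gcongr
    rwa [le_div_iff₀ (by positivity)]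
  · refine le_of_mul_le_mul_left ?_ hd'
    calc ‖d‖ * ‖A v‖ ≤ ‖e‖ * ‖v‖ := hAnorm v
      _ ≤ L * ‖d‖ * ‖v‖ := by gcongr
      _ = ‖d‖ * (L * ‖v‖) := by ring

end

theorem two_point_interpolation_ML_general
    {H : Type*} [NormedAddCommGroup H] [InnerProductSpace ℝ H]
    {μ L : ℝ} (hμ : 0 < μ) (hμL : μ ≤ L)
    (x₁ q₁ x₂ q₂ : H) :
    (∃ Q : H → H,
        (∀ a b : H, ⟪Q a - Q b, a - b⟫ ≥ μ * ‖a - b‖ ^ 2) ∧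
        (∀ a b : H, ‖Q a - Q b‖ ≤ L * ‖a - b‖) ∧
        Q x₁ = q₁ ∧ Q x₂ = q₂) ↔
      (⟪x₁ - x₂, q₁ - q₂⟫ ≥ μ * ‖x₁ - x₂‖ ^ 2 ∧
       ‖q₁ - q₂‖ ^ 2 ≤ L ^ 2 * ‖x₁ - x₂‖ ^ 2) := by
  constructor
  · rintro ⟨Q, hmono, hlip, rfl, rfl⟩
    refine ⟨by simpa only [real_inner_comm] using hmono x₁ x₂, ?_⟩
    rw [← mul_pow]
    exact pow_le_pow_left₀ (norm_nonneg _) (hlip x₁ x₂) 2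
  · rintro ⟨hde, he⟩
    have hL : 0 ≤ L := hμ.le.trans hμL
    obtain ⟨A, hAd, hAmono, hAlip⟩ := exists_clm_apply_eq_strongMonotone_lipschitz hμ.le hμL hde
      ((sq_le_sq₀ (norm_nonneg _) (by positivity)).mp (by rwa [mul_pow]))
    have hQ (a b : H) : A (a - x₂) + q₂ - (A (b - x₂) + q₂) = A (a - b) := by
      rw [add_sub_add_right_eq_sub, ← map_sub, sub_sub_sub_cancel_right]
    refine ⟨fun x => A (x - x₂) + q₂, fun a b => ?_, fun a b => ?_, ?_, ?_⟩
    · rw [hQ]; exact hAmono _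
    · rw [hQ]; exact hAlip _
    · simp [hAd]
    · simp

/-- Two-point interpolation with `M_μ ∩ L_L`: `{(x₁,q₁),(x₂,q₂)}` is interpolable by a
`μ`-strongly monotone and `L`-Lipschitz map iff the two corresponding inequalities hold. -/
theorem two_point_interpolation_ML
    {H : Type*} [NormedAddCommGroup H] [InnerProductSpace ℝ H] [CompleteSpace H]
    {μ L : ℝ} (hμ : 0 < μ) (hL : 0 < L) (hμL : μ ≤ L)
    (x₁ q₁ x₂ q₂ : H) :
    (∃ Q : H → H,
        (∀ a b : H, ⟪Q a - Q b, a - b⟫ ≥ μ * ‖a - b‖ ^ 2) ∧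
        (∀ a b : H, ‖Q a - Q b‖ ≤ L * ‖a - b‖) ∧
        Q x₁ = q₁ ∧ Q x₂ = q₂) ↔
      (⟪x₁ - x₂, q₁ - q₂⟫ ≥ μ * ‖x₁ - x₂‖ ^ 2 ∧
       ‖q₁ - q₂‖ ^ 2 ≤ L ^ 2 * ‖x₁ - x₂‖ ^ 2) :=
  two_point_interpolation_ML_general hμ hμL x₁ q₁ x₂ q₂
end

section
/- Let μ, β ∈ (0,∞) and θ ∈ (0,2), and suppose that none of the following four conditions holds: (a) μβ − μ + β < 0 and θ ≤ 2(β+1)(μ−β−μβ)/(μ+μβ−β−β²−2μβ²); (b) μβ − μ − β > 0 and θ ≤ 2(μ²+β²+μβ+μ+β−μ²β²)/(μ²+β²+μ²β+μβ²+μ+β−2μ²β²); (c) θ ≥ 2(μβ+μ+β)/(2μβ+μ+β); (d) μβ + μ − β < 0 and θ ≤ 2(μ+1)(β−μ−μβ)/(β+μβ−μ−μ²−2μ²β). Define K_num = ((2−θ)μ(μ+1) + β(μ−1)(2−θ+2μ(1−θ)))·((2−θ)μ + β(2(1−θ)μ−θ+2)) and K_den = β²(θ−2)μ(2β(θ−2)−θ−2)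 + β²(2β+1)(θ−2)² + (2β−1)μ³(2β(θ−1)+θ−2)² − (2β−1)μ²(2β−θ+2)(2β(θ−1)+θ−2). Then K_den > 0, K_num > 0, and the quantity K = K_num/K_den satisfies 0 < K < 1/β². -/
/-!
One has `K_num = factor μ β θ · cSlack` and `K_den − β² K_num = factor β μ θ · bSlack`, so it
suffices that these four quantities are positive. The failure of (c) is `cSlack > 0`. The
failure of (d) gives `factor μ β θ > 0` when `μβ + μ − β < 0`; otherwise `factor μ β θ` is a
nonnegative combination of `cSlack` and `θ`. The swap `μ ↔ β` exchanges (d) with (a) and fixes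
`cSlack`, which handles `factor β μ θ`. In the same way the failure of (b) gives `bSlack > 0`
when `μβ − μ − β > 0`, and otherwise `bSlack` is a nonnegative combination of `cSlack` and `θ`.
-/

namespace DRSCaseE

def cSlack (μ β θ : ℝ) : ℝ := 2 * (μ * β + μ + β) - θ * (2 * μ * β + μ + β)

def bSlack (μ β θ : ℝ) : ℝ :=
  2 * (μ ^ 2 + β ^ 2 + μ * β + μ + β - μ ^ 2 * β ^ 2) -
    θ * (μ ^ 2 + β ^ 2 + μ ^ 2 * β + μ * β ^ 2 + μ + β - 2 * μ ^ 2 * β ^ 2)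

def factor (μ β θ : ℝ) : ℝ := (2 - θ) * μ * (μ + 1) + β * (μ - 1) * (2 - θ + 2 * μ * (1 - θ))

variable {μ β θ : ℝ}

lemma cSlack_comm : cSlack β μ θ = cSlack μ β θ := by
  unfold cSlack; ring

lemma cSlack_pos (hμ : 0 < μ) (hβ : 0 < β)
    (hc : ¬(θ ≥ 2 * (μ * β + μ + β) / (2 * μ * β + μ + β))) : 0 < cSlack μ β θ := by
  have hθ : θ * (2 * μ * β + μ + β) < 2 * (μ * β + μ + β) :=
    (lt_div_iff₀ (by positivity)).mp (not_le.mp hc)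
  unfold cSlack; linarith

lemma factor_pos_of_nonneg (hμ : 0 < μ) (hβ : 0 < β) (hθ : 0 < θ) (hC : 0 < cSlack μ β θ)
    (hP : 0 ≤ μ * β + μ - β) : 0 < factor μ β θ := by
  have key : (μ * β + μ + β) * factor μ β θ =
      (μ + 1) * (μ * β + μ - β) * cSlack μ β θ + 2 * μ ^ 2 * β * θ := by
    unfold factor cSlack; ring
  have : 0 < (μ * β + μ + β) * factor μ β θ := by
    rw [key]; positivity
  exact pos_of_mul_pos_right this (by positivity)

lemma factor_pos_of_neg (hμ : 0 < μ) (hP : μ * β + μ - β < 0)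
    (hθ : 2 * (μ + 1) * (β - μ - μ * β) / (β + μ * β - μ - μ ^ 2 - 2 * μ ^ 2 * β) < θ) :
    0 < factor μ β θ := by
  -- `μβ + μ < β` gives `2β − μ − 2μβ > μ`, whence the denominator is positive.
  have hD : 0 < β + μ * β - μ - μ ^ 2 - 2 * μ ^ 2 * β := by
    have h : β + μ * β - μ - μ ^ 2 - 2 * μ ^ 2 * β =
        -(μ * β + μ - β) + μ * (2 * β - μ - 2 * μ * β) := by ring
    rw [h]; nlinarith
  have h := (div_lt_iff₀ hD).mp hθ
  have key : factor μ β θ =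
      θ * (β + μ * β - μ - μ ^ 2 - 2 * μ ^ 2 * β) - 2 * (μ + 1) * (β - μ - μ * β) := by
    unfold factor; ring
  linarith

lemma factor_pos (hμ : 0 < μ) (hβ : 0 < β) (hθ : 0 < θ) (hC : 0 < cSlack μ β θ)
    (hd : ¬(μ * β + μ - β < 0 ∧
      θ ≤ 2 * (μ + 1) * (β - μ - μ * β) / (β + μ * β - μ - μ ^ 2 - 2 * μ ^ 2 * β))) :
    0 < factor μ β θ := by
  rcases lt_or_ge (μ * β + μ - β) 0 with hP | hP
  · exact factor_pos_of_neg hμ hP (not_le.mp (not_and.mp hd hP))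
  · exact factor_pos_of_nonneg hμ hβ hθ hC hP

lemma bSlack_pos_of_nonpos (hμ : 0 < μ) (hβ : 0 < β) (hθ : 0 < θ) (hC : 0 < cSlack μ β θ)
    (hQ : μ * β - μ - β ≤ 0) : 0 < bSlack μ β θ := by
  have key : (μ * β + μ + β) * bSlack μ β θ =
      (μ + β - μ * β) * (μ + β + μ * β + 1) * cSlack μ β θ + 2 * μ * β * (μ + β) * θ := by
    unfold bSlack cSlack; ring
  have hA : 0 ≤ μ + β - μ * β := by linarith
  have : 0 < (μ * β + μ + β) * bSlack μ β θ := by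
    rw [key]; positivity
  exact pos_of_mul_pos_right this (by positivity)

lemma bSlack_pos_of_pos (hμ : 0 < μ) (hβ : 0 < β) (hQ : μ * β - μ - β > 0)
    (hθ : 2 * (μ ^ 2 + β ^ 2 + μ * β + μ + β - μ ^ 2 * β ^ 2) /
      (μ ^ 2 + β ^ 2 + μ ^ 2 * β + μ * β ^ 2 + μ + β - 2 * μ ^ 2 * β ^ 2) < θ) :
    0 < bSlack μ β θ := by
  -- With `s = μ + β < p = μβ` the denominator is `s² − 2p + ps + s − 2p² < s − 2p < 0`.
  have hB : μ ^ 2 + β ^ 2 + μ ^ 2 * β + μ * β ^ 2 + μ + β - 2 * μ ^ 2 * β ^ 2 < 0 := by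
    have hs : 0 < μ + β := by positivity
    nlinarith [mul_lt_mul_of_pos_left hQ hs, mul_lt_mul_of_pos_left hQ (mul_pos hμ hβ)]
  have h := (div_lt_iff_of_neg hB).mp hθ
  unfold bSlack; linarith

lemma bSlack_pos (hμ : 0 < μ) (hβ : 0 < β) (hθ : 0 < θ) (hC : 0 < cSlack μ β θ)
    (hb : ¬(μ * β - μ - β > 0 ∧
      θ ≤ 2 * (μ ^ 2 + β ^ 2 + μ * β + μ + β - μ ^ 2 * β ^ 2) /
        (μ ^ 2 + β ^ 2 + μ ^ 2 * β + μ * β ^ 2 + μ + β - 2 * μ ^ 2 * β ^ 2))) :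
    0 < bSlack μ β θ := by
  rcases lt_or_ge 0 (μ * β - μ - β) with hQ | hQ
  · exact bSlack_pos_of_pos hμ hβ hQ (not_le.mp (not_and.mp hb hQ))
  · exact bSlack_pos_of_nonpos hμ hβ hθ hC hQ

end DRSCaseE

open DRSCaseE

theorem DRS_case_e_K_bounds_general (μ β θ : ℝ) (hμ : 0 < μ) (hβ : 0 < β)
    (hθ₀ : 0 < θ)
    (ha : ¬(μ * β - μ + β < 0 ∧
      θ ≤ 2 * (β + 1) * (μ - β - μ * β) / (μ + μ * β - β - β ^ 2 - 2 * μ * β ^ 2)))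
    (hb : ¬(μ * β - μ - β > 0 ∧
      θ ≤ 2 * (μ ^ 2 + β ^ 2 + μ * β + μ + β - μ ^ 2 * β ^ 2) /
        (μ ^ 2 + β ^ 2 + μ ^ 2 * β + μ * β ^ 2 + μ + β - 2 * μ ^ 2 * β ^ 2)))
    (hc : ¬(θ ≥ 2 * (μ * β + μ + β) / (2 * μ * β + μ + β)))
    (hd : ¬(μ * β + μ - β < 0 ∧
      θ ≤ 2 * (μ + 1) * (β - μ - μ * β) / (β + μ * β - μ - μ ^ 2 - 2 * μ ^ 2 * β)))
    (Knum Kden : ℝ)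
    (hKnum : Knum = ((2 - θ) * μ * (μ + 1) + β * (μ - 1) * (2 - θ + 2 * μ * (1 - θ))) *
      ((2 - θ) * μ + β * (2 * (1 - θ) * μ - θ + 2)))
    (hKden : Kden = β ^ 2 * (θ - 2) * μ * (2 * β * (θ - 2) - θ - 2) +
      β ^ 2 * (2 * β + 1) * (θ - 2) ^ 2 +
      (2 * β - 1) * μ ^ 3 * (2 * β * (θ - 1) + θ - 2) ^ 2 -
      (2 * β - 1) * μ ^ 2 * (2 * β - θ + 2) * (2 * β * (θ - 1) + θ - 2)) :
    0 < Kden ∧ 0 < Knum ∧ 0 < Knum / Kden ∧ Knum / Kden < 1 / β ^ 2 := by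
  have hC := cSlack_pos hμ hβ hc
  have ha' : ¬(β * μ + β - μ < 0 ∧
      θ ≤ 2 * (β + 1) * (μ - β - β * μ) / (μ + β * μ - β - β ^ 2 - 2 * β ^ 2 * μ)) := by
    convert ha using 3 <;> ring
  have hKnum_eq : Knum = factor μ β θ * cSlack μ β θ := by
    rw [hKnum]; unfold factor cSlack; ring
  have hKden_eq : Kden = β ^ 2 * Knum + factor β μ θ * bSlack μ β θ := by
    rw [hKnum, hKden]; unfold factor bSlack; ring
  have hKnum_pos : 0 < Knum := hKnum_eq ▸ mul_pos (factor_pos hμ hβ hθ₀ hC hd) hC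
  have hgap : β ^ 2 * Knum < Kden := by
    rw [hKden_eq]
    linarith [mul_pos (factor_pos hβ hμ hθ₀ (cSlack_comm ▸ hC) ha') (bSlack_pos hμ hβ hθ₀ hC hb)]
  have hKden_pos : 0 < Kden := (mul_pos (by positivity) hKnum_pos).trans hgap
  refine ⟨hKden_pos, hKnum_pos, div_pos hKnum_pos hKden_pos, ?_⟩
  rw [div_lt_div_iff₀ hKden_pos (by positivity)]
  linarith

/-- In case (e) of the tight DRS contraction factor (with `A ∈ M_μ`, `B ∈ C_β`),
the quantity `K = K_num / K_den` used for the worst-case construction satisfies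
`K_den > 0`, `K_num > 0` and `0 < K < 1/β²`. -/
theorem DRS_case_e_K_bounds (μ β θ : ℝ) (hμ : 0 < μ) (hβ : 0 < β)
    (hθ₀ : 0 < θ) (hθ₂ : θ < 2)
    (ha : ¬(μ * β - μ + β < 0 ∧
      θ ≤ 2 * (β + 1) * (μ - β - μ * β) / (μ + μ * β - β - β ^ 2 - 2 * μ * β ^ 2)))
    (hb : ¬(μ * β - μ - β > 0 ∧
      θ ≤ 2 * (μ ^ 2 + β ^ 2 + μ * β + μ + β - μ ^ 2 * β ^ 2) /
        (μ ^ 2 + β ^ 2 + μ ^ 2 * β + μ * β ^ 2 + μ + β - 2 * μ ^ 2 * β ^ 2)))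
    (hc : ¬(θ ≥ 2 * (μ * β + μ + β) / (2 * μ * β + μ + β)))
    (hd : ¬(μ * β + μ - β < 0 ∧
      θ ≤ 2 * (μ + 1) * (β - μ - μ * β) / (β + μ * β - μ - μ ^ 2 - 2 * μ ^ 2 * β)))
    (Knum Kden : ℝ)
    (hKnum : Knum = ((2 - θ) * μ * (μ + 1) + β * (μ - 1) * (2 - θ + 2 * μ * (1 - θ))) *
      ((2 - θ) * μ + β * (2 * (1 - θ) * μ - θ + 2)))
    (hKden : Kden = β ^ 2 * (θ - 2) * μ * (2 * β * (θ - 2) - θ - 2) +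
      β ^ 2 * (2 * β + 1) * (θ - 2) ^ 2 +
      (2 * β - 1) * μ ^ 3 * (2 * β * (θ - 1) + θ - 2) ^ 2 -
      (2 * β - 1) * μ ^ 2 * (2 * β - θ + 2) * (2 * β * (θ - 1) + θ - 2)) :
    0 < Kden ∧ 0 < Knum ∧ 0 < Knum / Kden ∧ Knum / Kden < 1 / β ^ 2 :=
  DRS_case_e_K_bounds_general μ β θ hμ hβ hθ₀ ha hb hc hd Knum Kden hKnum hKden
end

section
/- Let μ, L ∈ (0,∞) and θ ∈ (0,2). Define the real 2×2 matrix T = [[1 − θ/(L²+1), Lθ/(L²+1)], [−Lθ(μ−1)/((L²+1)(μ+1)), ((μ+1−θ)L² − θμ + μ + 1)/((L²+1)(μ+1))]] and set C = √(((2(θ−1)μ+θ−2)² + L²(θ−2(μ+1))²)/(L²+1)). Then the eigenvalues of TᵀT are ((θ+C)/(2(μ+1)))² and ((θ−C)/(2(μ+1)))²; in particular, the operator norm of T as a linear map on Euclidean ℝ² equals (θ+C)/(2(μ+1)). -/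
/-!
Since `‖T‖² = ‖TᵀT‖` and `TᵀT` is self-adjoint, the squared operator norm of `T` is the spectral
radius of `TᵀT`. For a `2 × 2` matrix the spectrum is the root set of `X² - tr X + det`, so it
suffices to check that the two claimed values have sum `tr (TᵀT)` and product
`det (TᵀT) = (det T)²`; both are rational identities in `μ`, `L`, `θ` once `C²` is substituted.
The larger root is `((θ + C) / (2 (μ + 1)))²` because `θ, C ≥ 0`.
-/

open Matrix
open scoped ENNReal

open Polynomial in
theorem Matrix.spectrum_fin_two_eq_pair {K : Type*} [Field K] (M : Matrix (Fin 2) (Fin 2) K)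
    {a b : K} (htr : a + b = M.trace) (hdet : a * b = M.det) :
    spectrum K M = {a, b} := by
  ext x
  have hchar : M.charpoly = (X - C a) * (X - C b) := by
    rw [charpoly_fin_two, ← htr, ← hdet]
    simp only [map_add, map_mul]
    ring
  rw [mem_spectrum_iff_isRoot_charpoly, hchar, IsRoot, eval_mul]
  simp [sub_eq_zero]

theorem spectralRadius_eq_of_spectrum_eq_pair {A : Type*} [Ring A] [Algebra ℝ A] {M : A}
    {a b : ℝ} (hM : spectrum ℝ M = {a, b}) (hb : 0 ≤ b) (hba : b ≤ a) :
    spectralRadius ℝ M = ENNReal.ofReal a := by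
  have ha : 0 ≤ a := hb.trans hba
  rw [spectralRadius, hM, iSup_insert, iSup_singleton, Real.nnnorm_of_nonneg ha,
    Real.nnnorm_of_nonneg hb, ENNReal.ofReal_eq_coe_nnreal ha]
  exact sup_eq_left.mpr (by exact_mod_cast hba)

open scoped Matrix.Norms.L2Operator in
theorem Matrix.nnnorm_toEuclideanCLM_sq_eq_spectralRadius {𝕜 n : Type*} [RCLike 𝕜] [Fintype n]
    [DecidableEq n] (T : Matrix n n 𝕜) :
    (‖toEuclideanCLM (𝕜 := 𝕜) T‖₊ : ℝ≥0∞) ^ 2 = spectralRadius 𝕜 (Tᴴ * T) := by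
  have hsa : IsSelfAdjoint (toEuclideanCLM (𝕜 := 𝕜) (Tᴴ * T)) :=
    (IsSelfAdjoint.star_mul_self T).map _
  have hspec : spectralRadius 𝕜 (toEuclideanCLM (𝕜 := 𝕜) (Tᴴ * T)) =
      spectralRadius 𝕜 (Tᴴ * T) := by
    rw [spectralRadius, spectralRadius,
      ← AlgEquiv.spectrum_eq (toEuclideanCLM (𝕜 := 𝕜) (n := n)).toAlgEquiv (Tᴴ * T)]
    rfl
  rw [← hspec, ContinuousLinearMap.spectralRadius_eq_nnnorm _ hsa, ← cstar_nnnorm_def (Tᴴ * T),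
    l2_opNNNorm_conjTranspose_mul_self, cstar_nnnorm_def, sq, ENNReal.coe_mul]

theorem Matrix.norm_toEuclideanCLM_eq_of_spectrum_eq_pair {n : Type*} [Fintype n]
    [DecidableEq n] (T : Matrix n n ℝ) {a b : ℝ} (hspec : spectrum ℝ (Tᵀ * T) = {a ^ 2, b ^ 2})
    (ha : 0 ≤ a) (hba : b ^ 2 ≤ a ^ 2) :
    ‖toEuclideanCLM (𝕜 := ℝ) T‖ = a := by
  have hsq := nnnorm_toEuclideanCLM_sq_eq_spectralRadius T
  rw [conjTranspose_eq_transpose_of_trivial,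
    spectralRadius_eq_of_spectrum_eq_pair hspec (sq_nonneg b) hba] at hsq
  have hsq' := congrArg ENNReal.toReal hsq
  rw [ENNReal.toReal_pow, ENNReal.coe_toReal, coe_nnnorm, ENNReal.toReal_ofReal (sq_nonneg a)]
    at hsq'
  exact (sq_eq_sq₀ (norm_nonneg _) ha).mp hsq'

theorem DRS_lipschitz_case_a_lower_bound_matrix_general (μ L θ : ℝ)
    (hμ : 0 < μ) (hθ₀ : 0 < θ)
    (T : Matrix (Fin 2) (Fin 2) ℝ)
    (hT : T = !![1 - θ / (L ^ 2 + 1), L * θ / (L ^ 2 + 1);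
      -(L * θ * (μ - 1)) / ((L ^ 2 + 1) * (μ + 1)),
      ((μ + 1 - θ) * L ^ 2 - θ * μ + μ + 1) / ((L ^ 2 + 1) * (μ + 1))])
    (C : ℝ)
    (hC : C = Real.sqrt (((2 * (θ - 1) * μ + θ - 2) ^ 2 +
      L ^ 2 * (θ - 2 * (μ + 1)) ^ 2) / (L ^ 2 + 1))) :
    spectrum ℝ (Tᵀ * T) =
      {((θ + C) / (2 * (μ + 1))) ^ 2, ((θ - C) / (2 * (μ + 1))) ^ 2} ∧
    ‖Matrix.toEuclideanCLM (𝕜 := ℝ) T‖ = (θ + C) / (2 * (μ + 1)) := by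
  have hμ₁ : 0 < μ + 1 := by linarith
  have hC₀ : 0 ≤ C := hC ▸ Real.sqrt_nonneg _
  have hC₂ : C ^ 2 = ((2 * (θ - 1) * μ + θ - 2) ^ 2 +
      L ^ 2 * (θ - 2 * (μ + 1)) ^ 2) / (L ^ 2 + 1) := hC ▸ Real.sq_sqrt (by positivity)
  have hdet : T.det = (C ^ 2 - θ ^ 2) / (4 * (μ + 1) ^ 2) := by
    rw [hT, det_fin_two_of, hC₂]
    field_simp
    ring
  have htr : (Tᵀ * T).trace = (θ ^ 2 + C ^ 2) / (2 * (μ + 1) ^ 2) := by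
    rw [hT, hC₂, trace_fin_two]
    simp only [mul_apply, transpose_apply, of_apply, cons_val', cons_val_zero, cons_val_one,
      cons_val_fin_one, Fin.sum_univ_two]
    field_simp
    ring
  have hspec : spectrum ℝ (Tᵀ * T) =
      {((θ + C) / (2 * (μ + 1))) ^ 2, ((θ - C) / (2 * (μ + 1))) ^ 2} := by
    refine spectrum_fin_two_eq_pair _ ?_ ?_
    · rw [htr]; field_simp; ring
    · rw [det_mul, det_transpose, hdet]; field_simp; ring
  have hle : ((θ - C) / (2 * (μ + 1))) ^ 2 ≤ ((θ + C) / (2 * (μ + 1))) ^ 2 := by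
    rw [div_pow, div_pow]
    exact div_le_div_of_nonneg_right (by nlinarith) (by positivity)
  exact ⟨hspec, norm_toEuclideanCLM_eq_of_spectrum_eq_pair T hspec (by positivity) hle⟩

/-- The worst-case Douglas–Rachford operator for case (a) with `A ∈ M_μ`,
`B ∈ M ∩ L_L`: the eigenvalues of `TᵀT` are `((θ±C)/(2(μ+1)))²` and the operator norm
of `T` on Euclidean `ℝ²` is `(θ+C)/(2(μ+1))`. -/
theorem DRS_lipschitz_case_a_lower_bound_matrix (μ L θ : ℝ)
    (hμ : 0 < μ) (hL : 0 < L) (hθ₀ : 0 < θ) (hθ₂ : θ < 2)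
    (T : Matrix (Fin 2) (Fin 2) ℝ)
    (hT : T = !![1 - θ / (L ^ 2 + 1), L * θ / (L ^ 2 + 1);
      -(L * θ * (μ - 1)) / ((L ^ 2 + 1) * (μ + 1)),
      ((μ + 1 - θ) * L ^ 2 - θ * μ + μ + 1) / ((L ^ 2 + 1) * (μ + 1))])
    (C : ℝ)
    (hC : C = Real.sqrt (((2 * (θ - 1) * μ + θ - 2) ^ 2 +
      L ^ 2 * (θ - 2 * (μ + 1)) ^ 2) / (L ^ 2 + 1))) :
    spectrum ℝ (Tᵀ * T) =
      {((θ + C) / (2 * (μ + 1))) ^ 2, ((θ - C) / (2 * (μ + 1))) ^ 2} ∧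
    ‖Matrix.toEuclideanCLM (𝕜 := ℝ) T‖ = (θ + C) / (2 * (μ + 1)) :=
  DRS_lipschitz_case_a_lower_bound_matrix_general μ L θ hμ hθ₀ T hT C hC
end

section
/- Let μ, β ∈ (0,∞) and θ ∈ (0,2), and suppose that none of the following four conditions holds: (a) μβ − μ + β < 0 and θ ≤ 2(β+1)(μ−β−μβ)/(μ+μβ−β−β²−2μβ²); (b) μβ − μ − β > 0 and θ ≤ 2(μ²+β²+μβ+μ+β−μ²β²)/(μ²+β²+μ²β+μβ²+μ+β−2μ²β²); (c) θ ≥ 2(μβ+μ+β)/(2μβ+μ+β); (d) μβ + μ − β < 0 and θ ≤ 2(μ+1)(β−μ−μβ)/(β+μβ−μ−μ²−2μ²β). Set ρ² = ((2−θ)/4)·((2−θ)μ(β+1)+θβ(1−μ))·((2−θ)β(μ+1)+θμ(1−β))/(μβ(2μβ(1−θ)+(2−θ)(μ+β+1))), λ_A = θ·((2−θ)μ(β+1)+θβ(1−μ))/β, λ_B = (θ(2−θ)/β)·((2−θ)μ(β+1)+θβ(1−μ))/(2μβ(1−θ)+(2−θ)(μ+β+1)), K₁ = (β/(4μ))·θ/(2μβ(1−θ)+(2−θ)(μ+β+1)),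 m₁ = −2μ(2(θ−1)μβ+θβ+(θ−2)(μ+1)−2β)/β, m₂ = 2μ((β+1)(θ−2)+βθ)/β, and m₃ = (θ−2) − μ((β+1)(θ−2)+βθ)/β. Then λ_A ≥ 0, λ_B ≥ 0, K₁ ≥ 0, ρ² ≥ 0, and for every real Hilbert space H and all z, z_A, z_B ∈ H the identity ρ²‖z‖² − ‖z − θ(z_B − z_A)‖² − λ_A·(⟨2z_B − z − z_A, z_A⟩ − μ‖z_A‖²) − λ_B·(⟨z − z_B, z_B⟩ − β‖z − z_B‖²) = K₁·‖m₁·z_A + m₂·z_B + m₃·z‖² holds. -/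
/-!
Let `S = 2(μβ + μ + β) − θ(2μβ + μ + β)`, which is positive exactly when condition (c) fails.
The denominator `2μβ(1 − θ) + (2 − θ)(μ + β + 1)` equals `S + (2 − θ)`, and the factor
`E = (2 − θ)μ(β + 1) + θβ(1 − μ)` equals both `S + 2β(θ − 1)` and `2(1 − θ)μ(β + 1) + θ(μ + β)`,
so it is positive whichever side of `1` the relaxation parameter `θ` lies on; the second factor of
`ρ²` is `E` with `μ` and `β` exchanged. With these signs the multipliers are nonnegative, and the
identity itself is an identity of rational functions in the Gram entries of `z, z_A, z_B`.
-/

open RealInnerProductSpace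

section Signs

variable {μ β θ : ℝ}

lemma drs_factor_pos (hμ : 0 < μ) (hβ : 0 < β) (hθ₀ : 0 < θ)
    (hS : 0 < 2 * (μ * β + μ + β) - θ * (2 * μ * β + μ + β)) :
    0 < (2 - θ) * μ * (β + 1) + θ * β * (1 - μ) := by
  rcases le_or_gt θ 1 with hθ | hθ
  · have : 0 ≤ 2 * (1 - θ) * μ * (β + 1) := by
      have := sub_nonneg.2 hθ
      positivity
    nlinarith [mul_pos hθ₀ (add_pos hμ hβ)]
  · nlinarith [mul_pos hβ (sub_pos.2 hθ)]

lemma drs_denom_pos (hθ₂ : θ < 2)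
    (hS : 0 < 2 * (μ * β + μ + β) - θ * (2 * μ * β + μ + β)) :
    0 < 2 * μ * β * (1 - θ) + (2 - θ) * (μ + β + 1) := by
  nlinarith

end Signs

theorem DRS_case_e_sos_certificate_general
    {H : Type*} [NormedAddCommGroup H] [InnerProductSpace ℝ H]
    (μ β θ : ℝ) (hμ : 0 < μ) (hβ : 0 < β) (hθ₀ : 0 < θ) (hθ₂ : θ < 2)
    (hc : ¬(θ ≥ 2 * (μ * β + μ + β) / (2 * μ * β + μ + β)))
    (ρ2 lA lB K₁ m₁ m₂ m₃ : ℝ)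
    (hρ2 : ρ2 = (2 - θ) / 4 *
      (((2 - θ) * μ * (β + 1) + θ * β * (1 - μ)) * ((2 - θ) * β * (μ + 1) + θ * μ * (1 - β)) /
        (μ * β * (2 * μ * β * (1 - θ) + (2 - θ) * (μ + β + 1)))))
    (hlA : lA = θ * ((2 - θ) * μ * (β + 1) + θ * β * (1 - μ)) / β)
    (hlB : lB = θ * (2 - θ) / β *
      (((2 - θ) * μ * (β + 1) + θ * β * (1 - μ)) /
        (2 * μ * β * (1 - θ) + (2 - θ) * (μ + β + 1))))
    (hK₁ : K₁ = β / (4 * μ) * (θ / (2 * μ * β * (1 - θ) + (2 - θ) * (μ + β + 1))))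
    (hm₁ : m₁ = -2 * μ * (2 * (θ - 1) * μ * β + θ * β + (θ - 2) * (μ + 1) - 2 * β) / β)
    (hm₂ : m₂ = 2 * μ * ((β + 1) * (θ - 2) + β * θ) / β)
    (hm₃ : m₃ = (θ - 2) - μ * ((β + 1) * (θ - 2) + β * θ) / β) :
    0 ≤ lA ∧ 0 ≤ lB ∧ 0 ≤ K₁ ∧ 0 ≤ ρ2 ∧
    ∀ (z zA zB : H),
      ρ2 * ‖z‖ ^ 2 - ‖z - θ • (zB - zA)‖ ^ 2 -
          lA * (⟪(2 : ℝ) • zB - z - zA, zA⟫ - μ * ‖zA‖ ^ 2) -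
          lB * (⟪z - zB, zB⟫ - β * ‖z - zB‖ ^ 2) =
        K₁ * ‖m₁ • zA + m₂ • zB + m₃ • z‖ ^ 2 := by
  have hS : 0 < 2 * (μ * β + μ + β) - θ * (2 * μ * β + μ + β) := by
    rw [not_le, lt_div_iff₀ (by positivity)] at hc
    linarith
  have hE := drs_factor_pos hμ hβ hθ₀ hS
  have hF := drs_factor_pos hβ hμ hθ₀ (by linarith)
  have hD := drs_denom_pos hθ₂ hS
  have h2θ : 0 ≤ 2 - θ := by linarith
  subst hρ2 hlA hlB hK₁ hm₁ hm₂ hm₃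
  refine ⟨by positivity, by positivity, by positivity, by positivity, fun z zA zB => ?_⟩
  simp only [← real_inner_self_eq_norm_sq, inner_add_left, inner_add_right, inner_sub_left,
    inner_sub_right, real_inner_smul_left, real_inner_smul_right, real_inner_comm zA zB,
    real_inner_comm zA z, real_inner_comm zB z]
  field_simp
  ring

/-- The sum-of-squares certificate for case (e) of the tight contraction factor of
Douglas–Rachford splitting with a maximal `μ`-strongly monotone `A` and a `β`-cocoercive
`B`: the dual multipliers are nonnegative and the sum-of-squares identity holds in every
real Hilbert space. -/
theorem DRS_case_e_sos_certificate
    {H : Type*} [NormedAddCommGroup H] [InnerProductSpace ℝ H] [CompleteSpace H]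
    (μ β θ : ℝ) (hμ : 0 < μ) (hβ : 0 < β) (hθ₀ : 0 < θ) (hθ₂ : θ < 2)
    (ha : ¬(μ * β - μ + β < 0 ∧
      θ ≤ 2 * (β + 1) * (μ - β - μ * β) / (μ + μ * β - β - β ^ 2 - 2 * μ * β ^ 2)))
    (hb : ¬(μ * β - μ - β > 0 ∧
      θ ≤ 2 * (μ ^ 2 + β ^ 2 + μ * β + μ + β - μ ^ 2 * β ^ 2) /
        (μ ^ 2 + β ^ 2 + μ ^ 2 * β + μ * β ^ 2 + μ + β - 2 * μ ^ 2 * β ^ 2)))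
    (hc : ¬(θ ≥ 2 * (μ * β + μ + β) / (2 * μ * β + μ + β)))
    (hd : ¬(μ * β + μ - β < 0 ∧
      θ ≤ 2 * (μ + 1) * (β - μ - μ * β) / (β + μ * β - μ - μ ^ 2 - 2 * μ ^ 2 * β)))
    (ρ2 lA lB K₁ m₁ m₂ m₃ : ℝ)
    (hρ2 : ρ2 = (2 - θ) / 4 *
      (((2 - θ) * μ * (β + 1) + θ * β * (1 - μ)) * ((2 - θ) * β * (μ + 1) + θ * μ * (1 - β)) /
        (μ * β * (2 * μ * β * (1 - θ) + (2 - θ) * (μ + β + 1)))))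
    (hlA : lA = θ * ((2 - θ) * μ * (β + 1) + θ * β * (1 - μ)) / β)
    (hlB : lB = θ * (2 - θ) / β *
      (((2 - θ) * μ * (β + 1) + θ * β * (1 - μ)) /
        (2 * μ * β * (1 - θ) + (2 - θ) * (μ + β + 1))))
    (hK₁ : K₁ = β / (4 * μ) * (θ / (2 * μ * β * (1 - θ) + (2 - θ) * (μ + β + 1))))
    (hm₁ : m₁ = -2 * μ * (2 * (θ - 1) * μ * β + θ * β + (θ - 2) * (μ + 1) - 2 * β) / β)
    (hm₂ : m₂ = 2 * μ * ((β + 1) * (θ - 2) + β * θ) / β)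
    (hm₃ : m₃ = (θ - 2) - μ * ((β + 1) * (θ - 2) + β * θ) / β) :
    0 ≤ lA ∧ 0 ≤ lB ∧ 0 ≤ K₁ ∧ 0 ≤ ρ2 ∧
    ∀ (z zA zB : H),
      ρ2 * ‖z‖ ^ 2 - ‖z - θ • (zB - zA)‖ ^ 2 -
          lA * (⟪(2 : ℝ) • zB - z - zA, zA⟫ - μ * ‖zA‖ ^ 2) -
          lB * (⟪z - zB, zB⟫ - β * ‖z - zB‖ ^ 2) =
        K₁ * ‖m₁ • zA + m₂ • zB + m₃ • z‖ ^ 2 :=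
  DRS_case_e_sos_certificate_general μ β θ hμ hβ hθ₀ hθ₂ hc ρ2 lA lB K₁ m₁ m₂ m₃ hρ2 hlA hlB hK₁ hm₁
    hm₂ hm₃
end
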